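/- arXiv:2201.11042 — 4 statements merged into one kernel-verified Lean document; each statement's English description precedes it below -/
import Mathlib

section
/- Suppose the family (S_t)_{t≥0} given by S_t f = m_t · (f ∘ φ_t) is a strongly continuous semigroup of bounded operators on X, where (m_t)_{t≥0} is a family of holomorphic functions on Ω and φ is a global semiflow on Ω generated by a holomorphic function G. Assume the constant function e_0(z)=1 and the identity function e_1(z)=z belong to X. Then (m_t)_{t≥0} is a differentiable cocycle for φ, i.e. m_0(z)=1 for all z∈Ω, m_{t+s}(z)=m_t(z)·m_s(φ_t(z)) for all z∈Ω and t,s≥0, and t ↦ m_t(z) is continuous and differentiable for every z∈Ω; moreover the function g(z) := (∂/∂t m_t(z))|_{t=0} is holomorphic on Ω and m_t(z) = exp(∫₀ᵗ g(φ_s(z)) ds) for all t≥0 and z∈Ω. -/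
/-!
Since `e₀ ≡ 1`, the weight is `m_t = S_t e₀` on `Ω`: the semigroup law becomes the cocycle
identity, and strong continuity together with the continuous embedding makes `m_t → 1` uniformly
on compact sets as `t → 0⁺`, which already gives continuity of `t ↦ m_t(z)`.

For differentiability, integrate the cocycle identity over `[t, t + r]`:
`∫_t^{t+r} m_u(z) du = m_t(z) · D(φ_t z)` with `D = ∫_0^r m_s ds`. For small `r`, `D` is
holomorphic (a parametric integral of uniformly bounded holomorphic functions) and close to `r`,
hence nonzero, near a given point. So `m_t(z)` is a quotient of functions differentiable in `t`,
and its derivative is `m_t(z) · g(φ_t z)` where `g` is locally an explicit holomorphic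
expression in `m_r`, `D`, `D'` and `G`. Solving this linear equation gives the exponential.
-/

open Set Filter Topology MeasureTheory Metric intervalIntegral Interval

theorem TendstoUniformlyOn.comp_tendsto {α β ι ι' : Type*} [UniformSpace β] {F : ι → α → β}
    {f : α → β} {p : Filter ι} {s : Set α} (h : TendstoUniformlyOn F f p s) {q : Filter ι'}
    {k : ι' → ι} (hk : Tendsto k q p) : TendstoUniformlyOn (fun i => F (k i)) f q s :=
  fun u hu => hk.eventually (h u hu)

theorem tendstoUniformlyOn_apply_of_tendsto {R X α E ι : Type*} [Semiring R]
    [NormedAddCommGroup X] [Module R X] [NormedAddCommGroup E] [Module R E]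
    (T : X →ₗ[R] (α → E)) {K : Set α} {C : ℝ} (hT : ∀ f, ∀ z ∈ K, ‖T f z‖ ≤ C * ‖f‖)
    {F : ι → X} {f : X} {p : Filter ι} (hF : Tendsto F p (𝓝 f)) :
    TendstoUniformlyOn (fun i => T (F i)) (T f) p K := by
  have hC : Tendsto (fun i => C * ‖F i - f‖) p (𝓝 0) := by
    simpa using (tendsto_iff_norm_sub_tendsto_zero.1 hF).const_mul C
  refine Metric.tendstoUniformlyOn_iff.2 fun ε hε => ?_
  filter_upwards [(tendsto_order.1 hC).2 ε hε] with i hi z hz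
  rw [dist_eq_norm, norm_sub_rev, ← Pi.sub_apply, ← map_sub]
  exact (hT _ z hz).trans_lt hi

theorem aestronglyMeasurable_deriv_apply {𝕜 E α : Type*} [NontriviallyNormedField 𝕜]
    [NormedAddCommGroup E] [NormedSpace 𝕜 E] [MeasurableSpace α] {μ : Measure α}
    {f : α → 𝕜 → E} {x : 𝕜}
    (hmeas : ∀ᶠ y in 𝓝 x, AEStronglyMeasurable (fun a => f a y) μ)
    (hdiff : ∀ᵐ a ∂μ, DifferentiableAt 𝕜 (f a) x) :
    AEStronglyMeasurable (fun a => deriv (f a) x) μ := by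
  obtain ⟨v, hv⟩ := (𝓝[≠] x).exists_seq_tendsto
  obtain ⟨N, hN⟩ := eventually_atTop.1 (hv.eventually (hmeas.filter_mono nhdsWithin_le_nhds))
  refine aestronglyMeasurable_of_tendsto_ae atTop
    (f := fun n a => slope (f a) x (v (n + N))) (fun n => ?_) ?_
  · simp only [slope_def_module]
    exact ((hN _ (Nat.le_add_left N n)).sub hmeas.self_of_nhds).const_smul _
  · filter_upwards [hdiff] with a ha
    exact (hasDerivAt_iff_tendsto_slope.1 ha.hasDerivAt).comp
      (hv.comp (tendsto_add_atTop_nat N))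

theorem differentiableOn_intervalIntegral_of_norm_le {E : Type*} [NormedAddCommGroup E]
    [NormedSpace ℂ E] [CompleteSpace E] {f : ℝ → ℂ → E} {U : Set ℂ} {a b M : ℝ}
    (hU : IsOpen U) (hf : ∀ s ∈ Ι a b, DifferentiableOn ℂ (f s) U)
    (hmeas : ∀ w ∈ U, AEStronglyMeasurable (fun s => f s w) (volume.restrict (Ι a b)))
    (hbound : ∀ s ∈ Ι a b, ∀ w ∈ U, ‖f s w‖ ≤ M) :
    DifferentiableOn ℂ (fun w => ∫ s in a..b, f s w) U := by
  intro w₀ hw₀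
  obtain ⟨ε, hε, hball⟩ := Metric.isOpen_iff.1 hU w₀ hw₀
  have hsub : ∀ x ∈ ball w₀ (ε / 2), closedBall x (ε / 2) ⊆ U := fun x hx =>
    (closedBall_subset_ball' (by rw [mem_ball] at hx; linarith)).trans hball
  have hderiv : ∀ᵐ s ∂volume, s ∈ Ι a b → ∀ x ∈ ball w₀ (ε / 2),
      HasDerivAt (fun w => f s w) (deriv (f s) x) x :=
    ae_of_all _ fun s hs x hx => ((hf s hs).differentiableAt
      (hU.mem_nhds (hsub x hx (mem_closedBall_self (by positivity))))).hasDerivAt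
  -- the derivatives are dominated by the Cauchy estimate `M / (ε / 2)`
  refine (hasDerivAt_integral_of_dominated_loc_of_deriv_le (ball_mem_nhds w₀ (half_pos hε))
    (eventually_of_mem (hU.mem_nhds hw₀) hmeas) ?_ ?_ (bound := fun _ => M / (ε / 2)) ?_
    intervalIntegrable_const hderiv).2.differentiableAt.differentiableWithinAt
  · exact (intervalIntegrable_const (c := M)).mono_fun' (hmeas w₀ hw₀)
      ((ae_restrict_iff' measurableSet_uIoc).2 (ae_of_all _ fun s hs => hbound s hs w₀ hw₀))
  · refine aestronglyMeasurable_deriv_apply (eventually_of_mem (hU.mem_nhds hw₀) hmeas) ?_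
    exact (ae_restrict_iff' measurableSet_uIoc).2 (ae_of_all _ fun s hs =>
      (hf s hs).differentiableAt (hU.mem_nhds hw₀))
  · exact ae_of_all _ fun s hs x hx => Complex.norm_deriv_le_of_forall_mem_sphere_norm_le
      (half_pos hε) ((hf s hs).diffContOnCl_ball (hsub x hx))
      fun y hy => hbound s hs y (hsub x hx (sphere_subset_closedBall hy))

theorem hasDerivWithinAt_integral_Ici {E : Type*} [NormedAddCommGroup E] [NormedSpace ℝ E]
    [CompleteSpace E] {f : ℝ → E} {a τ : ℝ} (hf : ContinuousOn f (Ici a)) (hτ : a ≤ τ) :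
    HasDerivWithinAt (fun t => ∫ s in a..t, f s) (f τ) (Ici a) τ := by
  have hτ' : Fact (τ ∈ Icc a (τ + 1)) := ⟨⟨hτ, by linarith⟩⟩
  have hf' : ContinuousOn f (Icc a (τ + 1)) := hf.mono Icc_subset_Ici_self
  have hint : IntervalIntegrable f volume a τ :=
    (hf'.mono (Icc_subset_Icc_right (by linarith))).intervalIntegrable_of_Icc hτ
  refine (integral_hasDerivWithinAt_right (s := Icc a (τ + 1)) hint
    (hf'.stronglyMeasurableAtFilter_nhdsWithin measurableSet_Icc τ)
    (hf' τ hτ'.out)).mono_of_mem_nhdsWithin ?_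
  rw [← Ici_inter_Iic]
  exact inter_mem_nhdsWithin _ (Iic_mem_nhds (by linarith))

theorem eq_exp_integral_of_hasDerivWithinAt {u a : ℝ → ℂ} (ha : ContinuousOn a (Ici 0))
    (hu : ∀ t ≥ (0:ℝ), HasDerivWithinAt u (u t * a t) (Ici 0) t) (hu₀ : u 0 = 1)
    {t : ℝ} (ht : 0 ≤ t) : u t = Complex.exp (∫ s in (0:ℝ)..t, a s) := by
  set A : ℝ → ℂ := fun t => ∫ s in (0:ℝ)..t, a s
  have hv : ∀ x ≥ (0:ℝ), HasDerivWithinAt (fun t => u t * Complex.exp (-A t)) 0 (Ici 0) x :=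
    fun x hx =>
      ((hu x hx).mul (hasDerivWithinAt_integral_Ici ha hx).neg.cexp).congr_deriv (by ring)
  have hconst := constant_of_has_deriv_right_zero
    (fun x hx => (hv x hx.1).continuousWithinAt.mono Icc_subset_Ici_self)
    (fun x hx => (hv x hx.1).mono (Ici_subset_Ici.2 hx.1)) t ⟨ht, le_rfl⟩
  simp only [A, integral_same, neg_zero, Complex.exp_zero, mul_one, hu₀] at hconst
  rw [← mul_one (u t), ← Complex.exp_zero, ← neg_add_cancel (A t), Complex.exp_add, ← mul_assoc,
    hconst, one_mul]

def IsCocycle (Ω : Set ℂ) (φ m : ℝ → ℂ → ℂ) : Prop :=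
  ∀ t ≥ (0:ℝ), ∀ s ≥ (0:ℝ), ∀ z ∈ Ω, m (t + s) z = m t z * m s (φ t z)

noncomputable def timeIntegral (m : ℝ → ℂ → ℂ) (r : ℝ) (w : ℂ) : ℂ := ∫ s in (0:ℝ)..r, m s w

/-- Differentiating `m_t(z) · D(φ_t z) = ∫_t^{t+r} m_u(z) du`, where `D = timeIntegral m r`, gives
`∂ₜ m_t(z) · D + m_t(z) · G · D' = m_t(z) · (m_r(φ_t z) - 1)` at `φ_t z`. -/
noncomputable def localGenerator (G : ℂ → ℂ) (m : ℝ → ℂ → ℂ) (r : ℝ) (w : ℂ) : ℂ :=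
  (m r w - 1 - G w * deriv (timeIntegral m r) w) / timeIntegral m r w

theorem exists_ball_timeIntegral_differentiableOn_ne_zero {Ω : Set ℂ} {m : ℝ → ℂ → ℂ}
    (hΩ : IsOpen Ω) (hm_hol : ∀ t ≥ (0:ℝ), DifferentiableOn ℂ (m t) Ω)
    (hmc : ∀ z ∈ Ω, ContinuousOn (fun t => m t z) (Ici 0))
    (hm_unif : ∀ K ⊆ Ω, IsCompact K → TendstoUniformlyOn m 1 (𝓝[>] 0) K)
    {w₀ : ℂ} (hw₀ : w₀ ∈ Ω) :
    ∃ r > 0, ∃ ρ > 0, ball w₀ ρ ⊆ Ω ∧ DifferentiableOn ℂ (timeIntegral m r) (ball w₀ ρ) ∧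
      ∀ w ∈ ball w₀ ρ, timeIntegral m r w ≠ 0 := by
  obtain ⟨ρ, hρ, hK⟩ := nhds_basis_closedBall.mem_iff.1 (hΩ.mem_nhds hw₀)
  obtain ⟨u, hu, hsmall⟩ := (nhdsGT_basis 0).eventually_iff.1 <| Metric.tendstoUniformlyOn_iff.1
    (hm_unif _ hK (isCompact_closedBall w₀ ρ)) (1 / 2) (by norm_num)
  set r := u / 2
  have hr : 0 < r := half_pos hu
  have hclose : ∀ s ∈ Ι 0 r, ∀ w ∈ closedBall w₀ ρ, ‖m s w - 1‖ < 1 / 2 := fun s hs w hw => by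
    rw [uIoc_of_le hr.le] at hs
    simpa [dist_eq_norm, norm_sub_rev] using hsmall ⟨hs.1, hs.2.trans_lt (half_lt_self hu)⟩ w hw
  have hmeas : ∀ w ∈ closedBall w₀ ρ,
      AEStronglyMeasurable (fun s => m s w) (volume.restrict (Ι 0 r)) := fun w hw =>
    ((hmc w (hK hw)).mono fun s hs => (uIoc_of_le hr.le ▸ hs).1.le).aestronglyMeasurable
      measurableSet_uIoc
  refine ⟨r, hr, ρ, hρ, ball_subset_closedBall.trans hK, ?_, fun w hw hzero => ?_⟩
  · refine differentiableOn_intervalIntegral_of_norm_le isOpen_ball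
      (fun s hs => (hm_hol s (uIoc_of_le hr.le ▸ hs).1.le).mono (ball_subset_closedBall.trans hK))
      (fun w hw => hmeas w (ball_subset_closedBall hw)) (M := 3 / 2) fun s hs w hw => ?_
    have h₁ := hclose s hs w (ball_subset_closedBall hw)
    have h₂ := norm_sub_norm_le (m s w) 1
    rw [norm_one] at h₂
    linarith
  have hw' := ball_subset_closedBall hw
  have hsub : timeIntegral m r w - r = ∫ s in (0:ℝ)..r, (m s w - 1) := by
    rw [integral_sub ((hmc w (hK hw')).mono Icc_subset_Ici_self |>.intervalIntegrable_of_Icc hr.le)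
      intervalIntegrable_const]
    simp [timeIntegral]
  have hnear : ‖timeIntegral m r w - r‖ ≤ 1 / 2 * |r - 0| := by
    rw [hsub]
    exact norm_integral_le_of_norm_le_const fun s hs => (hclose s hs w hw').le
  rw [hzero, zero_sub, norm_neg, Complex.norm_real, sub_zero, Real.norm_eq_abs,
    abs_of_pos hr] at hnear
  linarith

theorem differentiableOn_localGenerator {G : ℂ → ℂ} {m : ℝ → ℂ → ℂ} {r : ℝ} {U : Set ℂ}
    (hU : IsOpen U) (hG : DifferentiableOn ℂ G U) (hm : DifferentiableOn ℂ (m r) U)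
    (hD : DifferentiableOn ℂ (timeIntegral m r) U) (hD₀ : ∀ w ∈ U, timeIntegral m r w ≠ 0) :
    DifferentiableOn ℂ (localGenerator G m r) U :=
  ((hm.sub_const 1).sub (hG.mul (hD.analyticOnNhd hU).deriv.differentiableOn)).div hD hD₀

namespace IsCocycle

variable {Ω : Set ℂ} {φ m : ℝ → ℂ → ℂ}

theorem continuousWithinAt_Ioi (hm : IsCocycle Ω φ m)
    (hφ_maps : ∀ t ≥ (0:ℝ), ∀ z ∈ Ω, φ t z ∈ Ω)
    (hm_unif : ∀ K ⊆ Ω, IsCompact K → TendstoUniformlyOn m 1 (𝓝[>] 0) K)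
    {z : ℂ} (hz : z ∈ Ω) {t₀ : ℝ} (ht₀ : 0 ≤ t₀) :
    ContinuousWithinAt (fun t => m t z) (Ioi t₀) t₀ := by
  have hsub : Tendsto (fun t => t - t₀) (𝓝[>] t₀) (𝓝[>] 0) := tendsto_nhdsWithin_iff.2
    ⟨tendsto_sub_nhds_zero_iff.2 (tendsto_id.mono_left nhdsWithin_le_nhds),
      eventually_nhdsWithin_of_forall fun t ht => sub_pos.2 (mem_Ioi.1 ht)⟩
  have h : Tendsto (fun t => m (t - t₀) (φ t₀ z)) (𝓝[>] t₀) (𝓝 1) :=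
    ((hm_unif _ (singleton_subset_iff.2 (hφ_maps t₀ ht₀ z hz)) isCompact_singleton).tendsto_at
      (mem_singleton _)).comp hsub
  have hlim := (tendsto_const_nhds (x := m t₀ z)).mul h
  rw [mul_one] at hlim
  refine hlim.congr' (eventually_nhdsWithin_of_forall fun t ht => ?_)
  rw [← hm t₀ ht₀ _ (sub_nonneg.2 (le_of_lt ht)) z hz, add_sub_cancel]

theorem continuousWithinAt_Ico (hm : IsCocycle Ω φ m)
    (hφ_maps : ∀ t ≥ (0:ℝ), ∀ z ∈ Ω, φ t z ∈ Ω)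
    (hφ_cont : ∀ z ∈ Ω, ContinuousOn (fun t => φ t z) (Ici 0))
    (hm_unif : ∀ K ⊆ Ω, IsCompact K → TendstoUniformlyOn m 1 (𝓝[>] 0) K)
    {z : ℂ} (hz : z ∈ Ω) {t₀ : ℝ} (ht₀ : 0 ≤ t₀) :
    ContinuousWithinAt (fun t => m t z) (Ico 0 t₀) t₀ := by
  -- `m t₀ z = m t z * m (t₀ - t) (φ t z)`, where the base point `φ t z` moves along the compact
  -- orbit segment `K`: this is where uniform convergence is needed
  set K := (fun s => φ s z) '' Icc 0 t₀
  have hK : K ⊆ Ω := by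
    rintro _ ⟨s, hs, rfl⟩
    exact hφ_maps s hs.1 z hz
  have hKc : IsCompact K :=
    isCompact_Icc.image_of_continuousOn ((hφ_cont z hz).mono Icc_subset_Ici_self)
  have hsub : Tendsto (fun t => t₀ - t) (𝓝[Ico 0 t₀] t₀) (𝓝[>] 0) := by
    refine tendsto_nhdsWithin_iff.2
      ⟨?_, eventually_nhdsWithin_of_forall fun t ht => sub_pos.2 ht.2⟩
    simpa using ((continuous_sub_left t₀).tendsto t₀).mono_left nhdsWithin_le_nhds
  have hφK : Tendsto (fun t => φ t z) (𝓝[Ico 0 t₀] t₀) (𝓝[K] (φ t₀ z)) :=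
    tendsto_nhdsWithin_iff.2 ⟨((hφ_cont z hz t₀ ht₀).mono Ico_subset_Ici_self).tendsto,
      eventually_nhdsWithin_of_forall fun t ht => mem_image_of_mem _ (Ico_subset_Icc_self ht)⟩
  have h : Tendsto (fun t => m (t₀ - t) (φ t z)) (𝓝[Ico 0 t₀] t₀) (𝓝 1) :=
    ((hm_unif K hK hKc).comp_tendsto hsub).tendsto_comp continuousWithinAt_const hφK
  have hlim := (tendsto_const_nhds (x := m t₀ z)).div h one_ne_zero
  rw [div_one] at hlim
  refine hlim.congr' ?_
  filter_upwards [self_mem_nhdsWithin, h.eventually_ne one_ne_zero] with t ht hne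
  rw [Pi.div_apply, div_eq_iff hne, ← hm t ht.1 _ (sub_nonneg.2 (le_of_lt ht.2)) z hz,
    add_sub_cancel]

theorem continuousOn (hm : IsCocycle Ω φ m)
    (hφ_maps : ∀ t ≥ (0:ℝ), ∀ z ∈ Ω, φ t z ∈ Ω)
    (hφ_cont : ∀ z ∈ Ω, ContinuousOn (fun t => φ t z) (Ici 0))
    (hm_unif : ∀ K ⊆ Ω, IsCompact K → TendstoUniformlyOn m 1 (𝓝[>] 0) K)
    {z : ℂ} (hz : z ∈ Ω) : ContinuousOn (fun t => m t z) (Ici 0) := by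
  intro t₀ ht₀
  refine ((hm.continuousWithinAt_Ico hφ_maps hφ_cont hm_unif hz ht₀).union
    (hm.continuousWithinAt_Ioi hφ_maps hm_unif hz ht₀)).insert.mono fun t ht => ?_
  rcases lt_trichotomy t t₀ with h | rfl | h
  · exact Or.inr (Or.inl ⟨ht, h⟩)
  · exact Or.inl rfl
  · exact Or.inr (Or.inr h)

theorem integral_eq (hm : IsCocycle Ω φ m) {z : ℂ} (hz : z ∈ Ω) {t r : ℝ} (ht : 0 ≤ t)
    (hr : 0 ≤ r) : ∫ u in t..t + r, m u z = m t z * timeIntegral m r (φ t z) := by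
  have hshift : ∫ u in t..t + r, m u z = ∫ s in (0:ℝ)..r, m (t + s) z := by
    simpa using (integral_comp_add_left (fun u => m u z) t (a := 0) (b := r)).symm
  rw [hshift, timeIntegral, ← intervalIntegral.integral_const_mul]
  exact integral_congr fun s hs => hm t ht s (uIcc_of_le hr ▸ hs).1 z hz

theorem hasDerivWithinAt_localGenerator (hm : IsCocycle Ω φ m) {G : ℂ → ℂ} {z : ℂ} {t₀ r : ℝ}
    (hz : z ∈ Ω) (hmz : ContinuousOn (fun t => m t z) (Ici 0))
    (hφ_ode : HasDerivWithinAt (fun t => φ t z) (G (φ t₀ z)) (Ici 0) t₀)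
    (ht₀ : 0 ≤ t₀) (hr : 0 ≤ r)
    (hD : DifferentiableAt ℂ (timeIntegral m r) (φ t₀ z))
    (hD₀ : timeIntegral m r (φ t₀ z) ≠ 0) :
    HasDerivWithinAt (fun t => m t z) (m t₀ z * localGenerator G m r (φ t₀ z)) (Ici 0) t₀ := by
  rw [localGenerator]
  set D := timeIntegral m r
  set F := fun t => ∫ u in (0:ℝ)..t, m u z
  have hFD : ∀ t ≥ (0:ℝ), F (t + r) - F t = m t z * D (φ t z) := fun t ht => by
    rw [integral_interval_sub_left, hm.integral_eq hz ht hr]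
    · exact (hmz.mono Icc_subset_Ici_self).intervalIntegrable_of_Icc (by linarith)
    · exact (hmz.mono Icc_subset_Ici_self).intervalIntegrable_of_Icc ht
  have hN : HasDerivWithinAt (fun t => F (t + r) - F t) (m (t₀ + r) z - m t₀ z) (Ici 0) t₀ := by
    refine HasDerivWithinAt.sub ?_ (hasDerivWithinAt_integral_Ici hmz ht₀)
    have hshift := (hasDerivWithinAt_integral_Ici hmz (add_nonneg ht₀ hr)).scomp t₀
      ((hasDerivWithinAt_id t₀ (Ici 0)).add_const r)
      (show MapsTo (fun t => id t + r) (Ici 0) (Ici 0) from fun t ht => add_nonneg ht hr)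
    simpa [Function.comp_def] using hshift
  have hDφ : HasDerivWithinAt (fun t => D (φ t z)) (deriv D (φ t₀ z) * G (φ t₀ z)) (Ici 0) t₀ :=
    hD.hasDerivAt.comp_hasDerivWithinAt (h := fun t => φ t z) t₀ hφ_ode
  have hm_eq : (fun t => m t z) =ᶠ[𝓝[Ici 0] t₀] fun t => (F (t + r) - F t) / D (φ t z) := by
    filter_upwards [self_mem_nhdsWithin, hDφ.continuousWithinAt.eventually_ne hD₀] with t ht hne
    rw [hFD t ht, mul_div_cancel_right₀ _ hne]
  refine ((hN.div hDφ hD₀).congr_of_eventuallyEq hm_eq ?_).congr_deriv ?_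
  · rw [Pi.div_apply, hFD t₀ ht₀, mul_div_cancel_right₀ _ hD₀]
  · rw [hFD t₀ ht₀, hm t₀ ht₀ r hr z hz]
    field_simp

theorem exists_generator (hm : IsCocycle Ω φ m) {G : ℂ → ℂ} (hΩ : IsOpen Ω)
    (hG : DifferentiableOn ℂ G Ω)
    (hφ_maps : ∀ t ≥ (0:ℝ), ∀ z ∈ Ω, φ t z ∈ Ω)
    (hφ_zero : ∀ z ∈ Ω, φ 0 z = z)
    (hφ_cont : ∀ z ∈ Ω, ContinuousOn (fun t => φ t z) (Ici 0))
    (hφ_ode : ∀ z ∈ Ω, ∀ t ≥ (0:ℝ), HasDerivWithinAt (fun s => φ s z) (G (φ t z)) (Ici 0) t)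
    (hm_hol : ∀ t ≥ (0:ℝ), DifferentiableOn ℂ (m t) Ω)
    (hm_zero : ∀ z ∈ Ω, m 0 z = 1)
    (hm_unif : ∀ K ⊆ Ω, IsCompact K → TendstoUniformlyOn m 1 (𝓝[>] 0) K) :
    ∃ g : ℂ → ℂ, DifferentiableOn ℂ g Ω ∧
      ∀ z ∈ Ω, ∀ t ≥ (0:ℝ), HasDerivWithinAt (fun s => m s z) (m t z * g (φ t z)) (Ici 0) t := by
  set g := fun w => derivWithin (fun t => m t w) (Ici 0) 0
  have hmc : ∀ z ∈ Ω, ContinuousOn (fun t => m t z) (Ici 0) :=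
    fun z hz => hm.continuousOn hφ_maps hφ_cont hm_unif hz
  have hloc : ∀ w₀ ∈ Ω, ∃ c : ℂ → ℂ, ∃ ρ > 0, DifferentiableOn ℂ c (ball w₀ ρ) ∧
      EqOn g c (ball w₀ ρ) ∧ ∀ z ∈ Ω, ∀ t ≥ (0:ℝ), φ t z ∈ ball w₀ ρ →
        HasDerivWithinAt (fun s => m s z) (m t z * c (φ t z)) (Ici 0) t := by
    intro w₀ hw₀
    obtain ⟨r, hr, ρ, hρ, hball, hD, hD₀⟩ :=
      exists_ball_timeIntegral_differentiableOn_ne_zero hΩ hm_hol hmc hm_unif hw₀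
    have hderiv : ∀ z ∈ Ω, ∀ t ≥ (0:ℝ), φ t z ∈ ball w₀ ρ →
        HasDerivWithinAt (fun s => m s z) (m t z * localGenerator G m r (φ t z)) (Ici 0) t :=
      fun z hz t ht hzt => hm.hasDerivWithinAt_localGenerator hz (hmc z hz) (hφ_ode z hz t ht) ht
        hr.le (hD.differentiableAt (isOpen_ball.mem_nhds hzt)) (hD₀ _ hzt)
    refine ⟨_, ρ, hρ, differentiableOn_localGenerator isOpen_ball (hG.mono hball)
      ((hm_hol r hr.le).mono hball) hD hD₀, fun w hw => ?_, hderiv⟩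
    have h₀ := hderiv w (hball hw) 0 le_rfl (by rwa [hφ_zero w (hball hw)])
    rw [hφ_zero w (hball hw), hm_zero w (hball hw), one_mul] at h₀
    exact h₀.derivWithin (uniqueDiffOn_Ici 0 0 self_mem_Ici)
  refine ⟨g, fun w₀ hw₀ => ?_, fun z hz t ht => ?_⟩
  · obtain ⟨c, ρ, hρ, hc, hgc, -⟩ := hloc w₀ hw₀
    have hnhds := isOpen_ball.mem_nhds (mem_ball_self (x := w₀) hρ)
    exact ((hc.differentiableAt hnhds).congr_of_eventuallyEq
      (eventually_of_mem hnhds hgc)).differentiableWithinAt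
  · obtain ⟨c, ρ, hρ, -, hgc, hderiv⟩ := hloc (φ t z) (hφ_maps t ht z hz)
    rw [hgc (mem_ball_self hρ)]
    exact hderiv z hz t ht (mem_ball_self hρ)

end IsCocycle

theorem weighted_composition_semigroup_cocycle_general
    -- Ω : nonempty open simply connected subset of ℂ
    (Ω : Set ℂ) (hΩopen : IsOpen Ω)
    -- X : complex Banach space embedding continuously in Hol(Ω)
    (X : Type*) [NormedAddCommGroup X] [NormedSpace ℂ X]
    (ι : X →ₗ[ℂ] (ℂ → ℂ))
    (hι_emb : ∀ K ⊆ Ω, IsCompact K → ∃ C > 0, ∀ f : X, ∀ z ∈ K, ‖ι f z‖ ≤ C * ‖f‖)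
    -- φ : global semiflow on Ω generated by the holomorphic function G
    (G : ℂ → ℂ) (hG : DifferentiableOn ℂ G Ω)
    (φ : ℝ → ℂ → ℂ)
    (hφ_maps : ∀ t ≥ (0:ℝ), ∀ z ∈ Ω, φ t z ∈ Ω)
    (hφ_zero : ∀ z ∈ Ω, φ 0 z = z)
    (hφ_cont : ∀ z ∈ Ω, ContinuousOn (fun t : ℝ => φ t z) (Ici 0))
    (hφ_ode : ∀ z ∈ Ω, ∀ t ≥ (0:ℝ),
      HasDerivWithinAt (fun s : ℝ => φ s z) (G (φ t z)) (Ici 0) t)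
    -- (m_t) : family of holomorphic functions on Ω
    (m : ℝ → ℂ → ℂ) (hm_hol : ∀ t ≥ (0:ℝ), DifferentiableOn ℂ (m t) Ω)
    -- e₀, e₁ ∈ X
    (e₀ : X) (he₀ : ∀ z ∈ Ω, ι e₀ z = 1)
    -- (S_t) : strongly continuous semigroup of bounded operators on X
    (S : ℝ → X →L[ℂ] X)
    (hS_zero : S 0 = ContinuousLinearMap.id ℂ X)
    (hS_add : ∀ t ≥ (0:ℝ), ∀ s ≥ (0:ℝ), S (t + s) = (S t).comp (S s))
    (hS_cont : ∀ f : X, Tendsto (fun t : ℝ => S t f) (𝓝[>] 0) (𝓝 f))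
    -- S_t f = m_t · (f ∘ φ_t)
    (hS_rep : ∀ t ≥ (0:ℝ), ∀ f : X, ∀ z ∈ Ω, ι (S t f) z = m t z * ι f (φ t z)) :
    -- (m_t) is a differentiable cocycle for φ:
    (∀ z ∈ Ω, m 0 z = 1) ∧
    (∀ t ≥ (0:ℝ), ∀ s ≥ (0:ℝ), ∀ z ∈ Ω, m (t + s) z = m t z * m s (φ t z)) ∧
    (∀ z ∈ Ω, ContinuousOn (fun t : ℝ => m t z) (Ici 0)) ∧
    (∀ z ∈ Ω, ∀ t ≥ (0:ℝ), DifferentiableWithinAt ℝ (fun s : ℝ => m s z) (Ici 0) t) ∧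
    -- moreover g := ∂/∂t m_t(z)|_{t=0} is holomorphic and m_t = exp(∫₀ᵗ g(φ_s(z)) ds)
    ∃ g : ℂ → ℂ, DifferentiableOn ℂ g Ω ∧
      (∀ z ∈ Ω, HasDerivWithinAt (fun t : ℝ => m t z) (g z) (Ici 0) 0) ∧
      (∀ t ≥ (0:ℝ), ∀ z ∈ Ω, m t z = Complex.exp (∫ s in (0:ℝ)..t, g (φ s z))) := by
  have hm : ∀ t ≥ (0:ℝ), ∀ z ∈ Ω, m t z = ι (S t e₀) z := fun t ht z hz => by
    rw [hS_rep t ht e₀ z hz, he₀ _ (hφ_maps t ht z hz), mul_one]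
  have hm_zero : ∀ z ∈ Ω, m 0 z = 1 := fun z hz => by
    rw [hm 0 le_rfl z hz, hS_zero, ContinuousLinearMap.id_apply, he₀ z hz]
  have hm_add : IsCocycle Ω φ m := fun t ht s hs z hz => by
    rw [hm (t + s) (add_nonneg ht hs) z hz, hS_add t ht s hs, ContinuousLinearMap.comp_apply,
      hS_rep t ht _ z hz, ← hm s hs _ (hφ_maps t ht z hz)]
  have hm_unif : ∀ K ⊆ Ω, IsCompact K → TendstoUniformlyOn m 1 (𝓝[>] 0) K := by
    intro K hK hKc
    obtain ⟨C, -, hC⟩ := hι_emb K hK hKc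
    refine ((tendstoUniformlyOn_apply_of_tendsto ι hC (hS_cont e₀)).congr ?_).congr_right
      fun z hz => he₀ z (hK hz)
    filter_upwards [self_mem_nhdsWithin] with t ht z hz using (hm t (le_of_lt ht) z (hK hz)).symm
  obtain ⟨g, hg, hgd⟩ :=
    hm_add.exists_generator hΩopen hG hφ_maps hφ_zero hφ_cont hφ_ode hm_hol hm_zero hm_unif
  refine ⟨hm_zero, hm_add, fun z hz => hm_add.continuousOn hφ_maps hφ_cont hm_unif hz,
    fun z hz t ht => (hgd z hz t ht).differentiableWithinAt, g, hg, fun z hz => ?_,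
    fun t ht z hz => ?_⟩
  · simpa [hφ_zero z hz, hm_zero z hz] using hgd z hz 0 le_rfl
  · exact eq_exp_integral_of_hasDerivWithinAt
      (hg.continuousOn.comp (hφ_cont z hz) fun s hs => hφ_maps s hs z hz) (hgd z hz)
      (hm_zero z hz) ht

/-- If the weighted composition family `S_t f = m_t · (f ∘ φ_t)` is a
strongly continuous semigroup on a Banach space `X` embedding continuously in `Hol(Ω)`
containing `e₀` and `e₁`, then `(m_t)` is a differentiable cocycle for the semiflow `φ`,
`g(z) = ∂/∂t m_t(z)|_{t=0}` is holomorphic, and `m_t(z) = exp (∫₀ᵗ g (φ_s z) ds)`. -/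
theorem weighted_composition_semigroup_cocycle
    -- Ω : nonempty open simply connected subset of ℂ
    (Ω : Set ℂ) (hΩne : Ω.Nonempty) (hΩopen : IsOpen Ω)
    (hΩsc : SimplyConnectedSpace Ω)
    -- X : complex Banach space embedding continuously in Hol(Ω)
    (X : Type*) [NormedAddCommGroup X] [NormedSpace ℂ X] [CompleteSpace X]
    (ι : X →ₗ[ℂ] (ℂ → ℂ)) (hι_inj : Function.Injective ι)
    (hι_hol : ∀ f : X, DifferentiableOn ℂ (ι f) Ω)
    (hι_emb : ∀ K ⊆ Ω, IsCompact K → ∃ C > 0, ∀ f : X, ∀ z ∈ K, ‖ι f z‖ ≤ C * ‖f‖)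
    -- φ : global semiflow on Ω generated by the holomorphic function G
    (G : ℂ → ℂ) (hG : DifferentiableOn ℂ G Ω)
    (φ : ℝ → ℂ → ℂ)
    (hφ_maps : ∀ t ≥ (0:ℝ), ∀ z ∈ Ω, φ t z ∈ Ω)
    (hφ_zero : ∀ z ∈ Ω, φ 0 z = z)
    (hφ_add : ∀ t ≥ (0:ℝ), ∀ s ≥ (0:ℝ), ∀ z ∈ Ω, φ (t + s) z = φ t (φ s z))
    (hφ_hol : ∀ t ≥ (0:ℝ), DifferentiableOn ℂ (fun z => φ t z) Ω)
    (hφ_cont : ∀ z ∈ Ω, ContinuousOn (fun t : ℝ => φ t z) (Ici 0))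
    (hφ_ode : ∀ z ∈ Ω, ∀ t ≥ (0:ℝ),
      HasDerivWithinAt (fun s : ℝ => φ s z) (G (φ t z)) (Ici 0) t)
    -- (m_t) : family of holomorphic functions on Ω
    (m : ℝ → ℂ → ℂ) (hm_hol : ∀ t ≥ (0:ℝ), DifferentiableOn ℂ (m t) Ω)
    -- e₀, e₁ ∈ X
    (e₀ e₁ : X) (he₀ : ∀ z ∈ Ω, ι e₀ z = 1) (he₁ : ∀ z ∈ Ω, ι e₁ z = z)
    -- (S_t) : strongly continuous semigroup of bounded operators on X
    (S : ℝ → X →L[ℂ] X)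
    (hS_zero : S 0 = ContinuousLinearMap.id ℂ X)
    (hS_add : ∀ t ≥ (0:ℝ), ∀ s ≥ (0:ℝ), S (t + s) = (S t).comp (S s))
    (hS_cont : ∀ f : X, Tendsto (fun t : ℝ => S t f) (𝓝[>] 0) (𝓝 f))
    -- S_t f = m_t · (f ∘ φ_t)
    (hS_rep : ∀ t ≥ (0:ℝ), ∀ f : X, ∀ z ∈ Ω, ι (S t f) z = m t z * ι f (φ t z)) :
    -- (m_t) is a differentiable cocycle for φ:
    (∀ z ∈ Ω, m 0 z = 1) ∧
    (∀ t ≥ (0:ℝ), ∀ s ≥ (0:ℝ), ∀ z ∈ Ω, m (t + s) z = m t z * m s (φ t z)) ∧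
    (∀ z ∈ Ω, ContinuousOn (fun t : ℝ => m t z) (Ici 0)) ∧
    (∀ z ∈ Ω, ∀ t ≥ (0:ℝ), DifferentiableWithinAt ℝ (fun s : ℝ => m s z) (Ici 0) t) ∧
    -- moreover g := ∂/∂t m_t(z)|_{t=0} is holomorphic and m_t = exp(∫₀ᵗ g(φ_s(z)) ds)
    ∃ g : ℂ → ℂ, DifferentiableOn ℂ g Ω ∧
      (∀ z ∈ Ω, HasDerivWithinAt (fun t : ℝ => m t z) (g z) (Ici 0) 0) ∧
      (∀ t ≥ (0:ℝ), ∀ z ∈ Ω, m t z = Complex.exp (∫ s in (0:ℝ)..t, g (φ s z))) :=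
  weighted_composition_semigroup_cocycle_general Ω hΩopen X ι hι_emb G hG φ hφ_maps hφ_zero hφ_cont
    hφ_ode m hm_hol e₀ he₀ S hS_zero hS_add hS_cont hS_rep
end

section
/- Let X be a complex Banach space embedding continuously in Hol(𝔻). Let (S_t)_{t≥0}, defined by S_t f = m_t·(f∘φ_t) with φ a global semiflow on 𝔻 generated by G ∈ Hol(𝔻), be a strongly continuous semigroup on X with generator Γ, and assume e_n ∈ D(Γ) for all n ∈ ℕ₀ (where e_n(z)=zⁿ). Assume: (a) there exists C > 0 such that for every bounded holomorphic h on 𝔻 and f ∈ X, h·f ∈ X and ‖hf‖_X ≤ C (sup_{𝔻}|h|) ‖f‖_X; (b) e_n·f ∈ X for all f ∈ X and n ∈ ℕ; (c) for every n ∈ ℕ there exists C_n > 0 with C_n‖f‖_X ≤ ‖e_n f‖_X for all f ∈ X; (d) lim_{n→∞} ‖e_n‖_X/(n C_n) = 0. Then there is a holomorphic g : 𝔻 → ℂ with m_t(z) = exp(∫₀ᵗ g(φ_s(z)) ds), and if g is bounded on 𝔻, then Γ is a bounded operator (i.e. there exists C′ > 0 with ‖Γf‖_X ≤ C′‖f‖_X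 for all f ∈ D(Γ)) if and only if G ≡ 0 on 𝔻. -/
/-!
Since `ι (S t e₀) = m t`, the weights satisfy the cocycle identity
`m (t + s) z = m t z * m s (φ t z)` and have right derivative `g := ι (Γ e₀)` at `t = 0`.
Hence `t ↦ m t z` solves `μ' = g (φ t z) μ` and is the exponential of `∫ g ∘ φ`.
Differentiating `m t * (f ∘ φ t)` at `t = 0` gives `Γ f = g f + G f'`. If `G = 0`, then `Γ` is
multiplication by the bounded function `g`, which is bounded by (a). Conversely, if `Γ` is
bounded, then `u := Γ e₁ - g e₁` represents `G` and `Γ eₙ - g eₙ = n eₙ₋₁ u`; multiplying by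
`z` and applying (c) gives `n Cₙ ‖u‖ ≲ ‖eₙ‖`, so `u = 0` by (d).
-/

open Set Filter Topology

theorem TendstoUniformlyOn.tendsto_comp_of_eventually_mem {ι α β γ : Type*} [UniformSpace β]
    {F : ι → α → β} {c : β} {p : Filter ι} {s : Set α}
    (hF : TendstoUniformlyOn F (fun _ => c) p s) {l : Filter γ} {i : γ → ι} {x : γ → α}
    (hi : Tendsto i l p) (hx : ∀ᶠ k in l, x k ∈ s) :
    Tendsto (fun k => F (i k) (x k)) l (𝓝 c) :=
  Uniform.tendsto_nhds_right.2 <|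
    (tendstoUniformlyOn_iff_tendsto.1 hF).comp (hi.prodMk (tendsto_principal.2 hx))

theorem tendsto_sub_nhdsWithin_Ici (a : ℝ) :
    Tendsto (fun s : ℝ => s - a) (𝓝[≥] a) (𝓝[≥] 0) :=
  tendsto_nhdsWithin_iff.2 ⟨(tendsto_sub_nhds_zero_iff.2 tendsto_id).mono_left nhdsWithin_le_nhds,
    eventually_nhdsWithin_of_forall fun _ (hs : a ≤ _) => sub_nonneg.2 hs⟩

theorem eq_exp_integral_of_hasDerivWithinAt_Ici {μ F : ℝ → ℂ} {b : ℝ} (hb : 0 ≤ b)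
    (hF : Continuous F) (hμ : ContinuousOn μ (Icc 0 b)) (hμ0 : μ 0 = 1)
    (hμ' : ∀ t ∈ Ico 0 b, HasDerivWithinAt μ (F t * μ t) (Ici t) t) :
    μ b = Complex.exp (∫ s in (0:ℝ)..b, F s) := by
  set I : ℝ → ℂ := fun u => ∫ s in (0:ℝ)..u, F s
  have hI : ∀ t, HasDerivAt I (F t) t := fun t => hF.integral_hasStrictDerivAt 0 t |>.hasDerivAt
  have hI_cont : Continuous I := continuous_iff_continuousAt.2 fun t => (hI t).continuousAt
  have hderiv : ∀ t ∈ Ico 0 b,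
      HasDerivWithinAt (fun t => μ t * Complex.exp (-I t)) 0 (Ici t) t := fun t ht =>
    ((hμ' t ht).mul (hI t).hasDerivWithinAt.neg.cexp).congr_deriv (by ring)
  have hconst := constant_of_has_deriv_right_zero (f := fun t => μ t * Complex.exp (-I t))
    (hμ.mul hI_cont.neg.cexp.continuousOn) hderiv b ⟨hb, le_rfl⟩
  simp only [I, intervalIntegral.integral_same, neg_zero, Complex.exp_zero, hμ0, mul_one,
    Complex.exp_neg] at hconst
  rwa [← div_eq_mul_inv, div_eq_one_iff_eq (Complex.exp_ne_zero _)] at hconst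

section Cocycle

variable {α : Type*} {U : Set α} {φ : ℝ → α → α} {m : ℝ → α → ℂ}

theorem hasDerivWithinAt_Ici_of_cocycle (hφU : ∀ t ≥ (0:ℝ), ∀ z ∈ U, φ t z ∈ U)
    (hcoc : ∀ t ≥ (0:ℝ), ∀ s ≥ (0:ℝ), ∀ z ∈ U, m (t + s) z = m t z * m s (φ t z))
    {g : α → ℂ} (hg : ∀ w ∈ U, HasDerivWithinAt (fun s => m s w) (g w) (Ici 0) 0)
    {t : ℝ} (ht : 0 ≤ t) {z : α} (hz : z ∈ U) :
    HasDerivWithinAt (fun s => m s z) (g (φ t z) * m t z) (Ici t) t := by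
  have hshift : HasDerivWithinAt (fun s => m (s - t) (φ t z)) (g (φ t z)) (Ici t) t := by
    have hsub : HasDerivWithinAt (fun s : ℝ => s - t) 1 (Ici t) t :=
      (hasDerivWithinAt_id t _).sub_const t
    have := (hg _ (hφU t ht z hz)).scomp_of_eq t hsub
      (fun s (hs : t ≤ s) => sub_nonneg.2 hs) (sub_self t).symm
    rwa [one_smul] at this
  refine (hshift.const_mul (m t z)).congr_of_mem (fun s hs => ?_) self_mem_Ici |>.congr_deriv
    (mul_comm _ _)
  simpa using hcoc t ht (s - t) (sub_nonneg.2 hs) z hz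

theorem continuousOn_Ici_of_cocycle [TopologicalSpace α]
    (hφU : ∀ t ≥ (0:ℝ), ∀ z ∈ U, φ t z ∈ U)
    (hcoc : ∀ t ≥ (0:ℝ), ∀ s ≥ (0:ℝ), ∀ z ∈ U, m (t + s) z = m t z * m s (φ t z))
    (hunif : ∀ K ⊆ U, IsCompact K → TendstoUniformlyOn m (fun _ => 1) (𝓝[≥] 0) K)
    {z : α} (hz : z ∈ U) (hφz : ContinuousOn (fun t => φ t z) (Ici 0)) :
    ContinuousOn (fun t => m t z) (Ici 0) := by
  intro t₀ (ht₀ : 0 ≤ t₀)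
  set K := (fun t => φ t z) '' Icc 0 t₀
  have hKU : K ⊆ U := by
    rintro _ ⟨t, ht, rfl⟩
    exact hφU t ht.1 z hz
  have hK := hunif K hKU (isCompact_Icc.image_of_continuousOn (hφz.mono Icc_subset_Ici_self))
  have hright : ContinuousWithinAt (fun t => m t z) (Ici t₀) t₀ := by
    have h := (hK.tendsto_comp_of_eventually_mem (tendsto_sub_nhdsWithin_Ici t₀)
      (Eventually.of_forall fun _ => ⟨t₀, ⟨ht₀, le_rfl⟩, rfl⟩)).const_mul (m t₀ z)
    rw [mul_one] at h
    refine h.congr' (eventually_nhdsWithin_of_forall fun t (ht : t₀ ≤ t) => ?_)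
    simpa using (hcoc t₀ ht₀ (t - t₀) (sub_nonneg.2 ht) z hz).symm
  -- `m t₀ z = m t z * m (t₀ - t) (φ t z)`, and the second factor tends to `1` uniformly
  -- along the compact orbit `K`.
  have hleft : ContinuousWithinAt (fun t => m t z) (Icc 0 t₀) t₀ := by
    have hrev : Tendsto (fun t => t₀ - t) (𝓝[Icc 0 t₀] t₀) (𝓝[≥] 0) :=
      tendsto_nhdsWithin_iff.2 ⟨((continuous_const.sub continuous_id).tendsto' t₀ 0
        (sub_self t₀)).mono_left nhdsWithin_le_nhds,
        eventually_nhdsWithin_of_forall fun _ ht => sub_nonneg.2 ht.2⟩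
    have h := hK.tendsto_comp_of_eventually_mem hrev
      (eventually_nhdsWithin_of_forall fun t ht => ⟨t, ht, rfl⟩)
    have h' := (tendsto_const_nhds (x := m t₀ z)).div h one_ne_zero
    rw [div_one] at h'
    refine h'.congr' ?_
    filter_upwards [self_mem_nhdsWithin, h.eventually_ne one_ne_zero] with t ht hne
    show m t₀ z / m (t₀ - t) (φ t z) = m t z
    rw [div_eq_iff hne]
    simpa using hcoc t ht.1 (t₀ - t) (sub_nonneg.2 ht.2) z hz
  have := hleft.union hright
  rwa [Icc_union_Ici_eq_Ici ht₀] at this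

theorem cocycle_eq_exp_integral [TopologicalSpace α] (hφU : ∀ t ≥ (0:ℝ), ∀ z ∈ U, φ t z ∈ U)
    (hcoc : ∀ t ≥ (0:ℝ), ∀ s ≥ (0:ℝ), ∀ z ∈ U, m (t + s) z = m t z * m s (φ t z))
    (hunif : ∀ K ⊆ U, IsCompact K → TendstoUniformlyOn m (fun _ => 1) (𝓝[≥] 0) K)
    {g : α → ℂ} (hg : ∀ w ∈ U, HasDerivWithinAt (fun s => m s w) (g w) (Ici 0) 0)
    (hgc : ContinuousOn g U) {z : α} (hz : z ∈ U) (hφz : ContinuousOn (fun t => φ t z) (Ici 0))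
    (hm0 : m 0 z = 1) {t : ℝ} (ht : 0 ≤ t) :
    m t z = Complex.exp (∫ s in (0:ℝ)..t, g (φ s z)) := by
  set F : ℝ → ℂ := fun s => g (φ (max s 0) z)
  have hF : Continuous F :=
    hgc.comp_continuous (hφz.comp_continuous (continuous_id.max continuous_const)
      fun s => le_max_right s 0) fun s => hφU _ (le_max_right s 0) z hz
  have hFeq : ∀ s, 0 ≤ s → F s = g (φ s z) := fun s hs => by simp only [F, max_eq_left hs]
  rw [eq_exp_integral_of_hasDerivWithinAt_Ici ht hF
    ((continuousOn_Ici_of_cocycle hφU hcoc hunif hz hφz).mono Icc_subset_Ici_self) hm0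
    fun s hs => hFeq s hs.1 ▸ hasDerivWithinAt_Ici_of_cocycle hφU hcoc hg hs.1 hz]
  refine congrArg Complex.exp (intervalIntegral.integral_congr fun s hs => hFeq s ?_)
  rw [uIcc_of_le ht] at hs
  exact hs.1

end Cocycle

section WeightedComposition

variable {X : Type*} [NormedAddCommGroup X] [NormedSpace ℂ X] {ι : X →ₗ[ℂ] (ℂ → ℂ)}
  {S : ℝ → X →L[ℂ] X} {m φ : ℝ → ℂ → ℂ}

theorem exists_norm_eval_le {U : Set ℂ}
    (hι : ∀ K ⊆ U, IsCompact K → ∃ C > 0, ∀ f : X, ∀ z ∈ K, ‖ι f z‖ ≤ C * ‖f‖)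
    {z : ℂ} (hz : z ∈ U) : ∃ C, ∀ f : X, ‖ι f z‖ ≤ C * ‖f‖ :=
  let ⟨C, _, hC⟩ := hι {z} (singleton_subset_iff.2 hz) isCompact_singleton
  ⟨C, fun f => hC f z rfl⟩

theorem HasDerivWithinAt.eval_of_norm_le {z : ℂ} {C : ℝ} (hC : ∀ f : X, ‖ι f z‖ ≤ C * ‖f‖)
    {u : ℝ → X} {u' : X} {s : Set ℝ} {t : ℝ} (hu : HasDerivWithinAt u u' s t) :
    HasDerivWithinAt (fun t => ι (u t) z) (ι u' z) s t :=
  ((((LinearMap.proj z).comp ι).mkContinuous C hC).restrictScalars ℝ).hasFDerivAt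
    |>.comp_hasDerivWithinAt t hu

theorem tendstoUniformlyOn_eval_of_norm_le {K : Set ℂ} {C : ℝ}
    (hC : ∀ f : X, ∀ z ∈ K, ‖ι f z‖ ≤ C * ‖f‖) {γ : Type*} {l : Filter γ} {F : γ → X} {f : X}
    (hF : Tendsto F l (𝓝 f)) : TendstoUniformlyOn (fun k => ι (F k)) (ι f) l K := by
  rw [Metric.tendstoUniformlyOn_iff]
  intro ε hε
  have hnorm := (tendsto_iff_norm_sub_tendsto_zero.1 hF).const_mul C
  rw [mul_zero] at hnorm
  filter_upwards [hnorm.eventually (gt_mem_nhds hε)] with k hk z hz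
  rw [dist_eq_norm', ← Pi.sub_apply, ← map_sub]
  exact (hC _ z hz).trans_lt hk

theorem hasDerivWithinAt_orbit (hS0 : S 0 = ContinuousLinearMap.id ℂ X)
    {f L : X} (hL : Tendsto (fun t : ℝ => (1 / (t:ℂ)) • (S t f - f)) (𝓝[>] 0) (𝓝 L)) :
    HasDerivWithinAt (fun t => S t f) L (Ici 0) 0 := by
  rw [hasDerivWithinAt_iff_tendsto_slope, Ici_sdiff_left]
  refine hL.congr fun t => ?_
  simp [slope_def_module, hS0, ← Complex.coe_smul]

theorem eval_orbit_deriv_eq {z : ℂ} {C : ℝ} (hC : ∀ f : X, ‖ι f z‖ ≤ C * ‖f‖) {f L : X}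
    (hL : HasDerivWithinAt (fun t => S t f) L (Ici 0) 0)
    (hrep : ∀ t ≥ (0:ℝ), ι (S t f) z = m t z * ι f (φ t z))
    {γ v : ℂ} (hm : HasDerivWithinAt (fun t => m t z) γ (Ici 0) 0) (hm0 : m 0 z = 1)
    (hφ : HasDerivWithinAt (fun t => φ t z) v (Ici 0) 0) (hφ0 : φ 0 z = z)
    (hf : DifferentiableAt ℂ (ι f) z) :
    ι L z = γ * ι f z + deriv (ι f) z * v := by
  have hcomp : HasDerivWithinAt (fun t => ι f (φ t z)) (deriv (ι f) z * v) (Ici 0) 0 :=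
    HasDerivAt.comp_hasDerivWithinAt_of_eq 0 hf.hasDerivAt hφ hφ0.symm
  have hprod : HasDerivWithinAt (fun t => ι (S t f) z) (γ * ι f z + deriv (ι f) z * v)
      (Ici 0) 0 := by
    have := (hm.mul hcomp).congr_of_mem (f₁ := fun t => ι (S t f) z) hrep self_mem_Ici
    rwa [hm0, hφ0, one_mul] at this
  exact (uniqueDiffWithinAt_Ici 0).eq_deriv _ (hL.eval_of_norm_le hC) hprod

theorem hasDerivWithinAt_weight {z : ℂ} {C : ℝ} (hC : ∀ f : X, ‖ι f z‖ ≤ C * ‖f‖) {e₀ L : X}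
    (hL : HasDerivWithinAt (fun t => S t e₀) L (Ici 0) 0)
    (hm : ∀ t ≥ (0:ℝ), ι (S t e₀) z = m t z) :
    HasDerivWithinAt (fun t => m t z) (ι L z) (Ici 0) 0 :=
  (hL.eval_of_norm_le hC).congr_of_mem
    (fun t ht => (hm t ht).symm) self_mem_Ici

theorem eval_generator_eq {U : Set ℂ} (hU : IsOpen U)
    (hι : ∀ K ⊆ U, IsCompact K → ∃ C > 0, ∀ f : X, ∀ z ∈ K, ‖ι f z‖ ≤ C * ‖f‖)
    (hι_hol : ∀ f : X, DifferentiableOn ℂ (ι f) U) {G : ℂ → ℂ}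
    (hφU : ∀ t ≥ (0:ℝ), ∀ z ∈ U, φ t z ∈ U) (hφ0 : ∀ z ∈ U, φ 0 z = z)
    (hφ : ∀ z ∈ U, ∀ t ≥ (0:ℝ), HasDerivWithinAt (fun s : ℝ => φ s z) (G (φ t z)) (Ici 0) t)
    (hS0 : S 0 = ContinuousLinearMap.id ℂ X)
    (hS_rep : ∀ t ≥ (0:ℝ), ∀ f : X, ∀ z ∈ U, ι (S t f) z = m t z * ι f (φ t z))
    {e₀ L₀ : X} (he₀ : ∀ z ∈ U, ι e₀ z = 1)
    (hL₀ : HasDerivWithinAt (fun t => S t e₀) L₀ (Ici 0) 0)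
    {f L : X} (hL : HasDerivWithinAt (fun t => S t f) L (Ici 0) 0)
    {z : ℂ} (hz : z ∈ U) :
    ι L z = ι L₀ z * ι f z + deriv (ι f) z * G z := by
  obtain ⟨C, hC⟩ := exists_norm_eval_le hι hz
  have hm : ∀ t ≥ (0:ℝ), ι (S t e₀) z = m t z := fun t ht => by
    rw [hS_rep t ht e₀ z hz, he₀ _ (hφU t ht z hz), mul_one]
  have hm0 : m 0 z = 1 := by
    rw [← hm 0 le_rfl, hS0, ContinuousLinearMap.id_apply, he₀ z hz]
  refine eval_orbit_deriv_eq hC hL (fun t ht => hS_rep t ht f z hz)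
    (hasDerivWithinAt_weight hC hL₀ hm) hm0 ?_ (hφ0 z hz)
    ((hι_hol f).differentiableAt (hU.mem_nhds hz))
  simpa only [hφ0 z hz] using hφ z hz 0 le_rfl

theorem weight_eq_exp_integral {U : Set ℂ} {e₀ L : X}
    (hι : ∀ K ⊆ U, IsCompact K → ∃ C > 0, ∀ f : X, ∀ z ∈ K, ‖ι f z‖ ≤ C * ‖f‖)
    (hLU : ContinuousOn (ι L) U)
    (hφU : ∀ t ≥ (0:ℝ), ∀ z ∈ U, φ t z ∈ U)
    (hφc : ∀ z ∈ U, ContinuousOn (fun t => φ t z) (Ici 0))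
    (hS0 : S 0 = ContinuousLinearMap.id ℂ X)
    (hS_add : ∀ t ≥ (0:ℝ), ∀ s ≥ (0:ℝ), S (t + s) = (S t).comp (S s))
    (hS_rep : ∀ t ≥ (0:ℝ), ∀ f : X, ∀ z ∈ U, ι (S t f) z = m t z * ι f (φ t z))
    (he₀ : ∀ z ∈ U, ι e₀ z = 1)
    (hL : HasDerivWithinAt (fun t => S t e₀) L (Ici 0) 0)
    {t : ℝ} (ht : 0 ≤ t) {z : ℂ} (hz : z ∈ U) :
    m t z = Complex.exp (∫ s in (0:ℝ)..t, ι L (φ s z)) := by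
  have hm : ∀ t ≥ (0:ℝ), ∀ z ∈ U, ι (S t e₀) z = m t z := fun t ht z hz => by
    rw [hS_rep t ht e₀ z hz, he₀ _ (hφU t ht z hz), mul_one]
  have hS0e₀ : S 0 e₀ = e₀ := by rw [hS0]; rfl
  have hcoc : ∀ t ≥ (0:ℝ), ∀ s ≥ (0:ℝ), ∀ z ∈ U, m (t + s) z = m t z * m s (φ t z) :=
    fun t ht s hs z hz => by
      rw [← hm _ (add_nonneg ht hs) z hz, hS_add t ht s hs, ContinuousLinearMap.comp_apply,
        hS_rep t ht _ z hz, hm s hs _ (hφU t ht z hz)]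
  have hunif : ∀ K ⊆ U, IsCompact K → TendstoUniformlyOn m (fun _ => 1) (𝓝[≥] 0) K := by
    intro K hKU hK
    obtain ⟨C, -, hC⟩ := hι K hKU hK
    have hcont : Tendsto (fun t => S t e₀) (𝓝[≥] 0) (𝓝 e₀) := by
      simpa only [hS0e₀] using hL.continuousWithinAt.tendsto
    refine ((tendstoUniformlyOn_eval_of_norm_le hC hcont).congr ?_).congr_right
      fun w hw => he₀ w (hKU hw)
    filter_upwards [self_mem_nhdsWithin] with t ht w hw using hm t ht w (hKU hw)
  have hderiv : ∀ w ∈ U, HasDerivWithinAt (fun s => m s w) (ι L w) (Ici 0) 0 := fun w hw =>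
    let ⟨_, hC⟩ := exists_norm_eval_le hι hw
    hasDerivWithinAt_weight hC hL fun t ht => hm t ht w hw
  have hm0 : m 0 z = 1 := by rw [← hm 0 le_rfl z hz, hS0e₀, he₀ z hz]
  exact cocycle_eq_exp_integral hφU hcoc hunif hderiv hLU hz (hφc z hz) hm0 ht

theorem eval_generator_monomial {U : Set ℂ} (hU : IsOpen U) {Γ : X → X} {𝒟 : Set X}
    {g G : ℂ → ℂ} (hgen : ∀ f ∈ 𝒟, ∀ z ∈ U, ι (Γ f) z = g z * ι f z + deriv (ι f) z * G z)
    {e : ℕ → X} (he : ∀ n : ℕ, ∀ z ∈ U, ι (e n) z = z ^ n) (he𝒟 : ∀ n : ℕ, e n ∈ 𝒟)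
    (n : ℕ) {z : ℂ} (hz : z ∈ U) :
    ι (Γ (e n)) z = g z * z ^ n + n * z ^ (n - 1) * G z := by
  have hderiv : deriv (ι (e n)) z = n * z ^ (n - 1) := by
    rw [(eventuallyEq_of_mem (hU.mem_nhds hz) (he n)).deriv_eq, deriv_pow_field]
  rw [hgen _ (he𝒟 n) z hz, he n z hz, hderiv]

theorem eq_zero_of_forall_eval_eq_zero {U : Set ℂ} {n : ℕ} {c : ℝ} (hc0 : 0 < c)
    (hc : ∀ f p : X, (∀ z ∈ U, ι p z = z ^ n * ι f z) → c * ‖f‖ ≤ ‖p‖)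
    {u : X} (hu : ∀ z ∈ U, ι u z = 0) : u = 0 := by
  have h := hc u 0 fun z hz => by rw [map_zero, hu z hz, Pi.zero_apply, mul_zero]
  rw [norm_zero] at h
  exact norm_le_zero_iff.1 (nonpos_of_mul_nonpos_right h hc0)

theorem mul_nat_mul_norm_le {U : Set ℂ} {Cz c : ℝ} {n : ℕ} (hn : 1 ≤ n)
    (hz_mul : ∀ f : X, ∃ p : X, (∀ z ∈ U, ι p z = z * ι f z) ∧ ‖p‖ ≤ Cz * ‖f‖)
    (hc : ∀ f p : X, (∀ z ∈ U, ι p z = z ^ n * ι f z) → c * ‖f‖ ≤ ‖p‖)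
    {u v : X} (huv : ∀ z ∈ U, ι v z = n * z ^ (n - 1) * ι u z) :
    c * (n * ‖u‖) ≤ Cz * ‖v‖ := by
  obtain ⟨p, hp, hpv⟩ := hz_mul v
  have h := hc ((n:ℂ) • u) p fun z hz => by
    have hpow : z * z ^ (n - 1) = z ^ n := by rw [← pow_succ', Nat.sub_add_cancel hn]
    rw [hp z hz, huv z hz, map_smul, Pi.smul_apply, smul_eq_mul, ← hpow]
    ring
  rw [norm_smul, Complex.norm_natCast] at h
  exact h.trans hpv

theorem eqOn_zero_of_generator_bounded {U : Set ℂ} {Γ : X → X} {e : ℕ → X} {g G : ℂ → ℂ}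
    {C' Cg Cz : ℝ} {Cn : ℕ → ℝ} (he : ∀ n : ℕ, ∀ z ∈ U, ι (e n) z = z ^ n)
    (hΓe : ∀ n : ℕ, ∀ z ∈ U, ι (Γ (e n)) z = g z * z ^ n + n * z ^ (n - 1) * G z)
    (hΓ : ∀ n : ℕ, ‖Γ (e n)‖ ≤ C' * ‖e n‖)
    (hg_mul : ∀ f : X, ∃ p : X, (∀ z ∈ U, ι p z = g z * ι f z) ∧ ‖p‖ ≤ Cg * ‖f‖)
    (hCz : 0 ≤ Cz) (hz_mul : ∀ f : X, ∃ p : X, (∀ z ∈ U, ι p z = z * ι f z) ∧ ‖p‖ ≤ Cz * ‖f‖)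
    (hCn_pos : ∀ n : ℕ, 1 ≤ n → 0 < Cn n)
    (hCn : ∀ n : ℕ, 1 ≤ n → ∀ f p : X, (∀ z ∈ U, ι p z = z ^ n * ι f z) → Cn n * ‖f‖ ≤ ‖p‖)
    (hd : Tendsto (fun n : ℕ => ‖e n‖ / (n * Cn n)) atTop (𝓝 0)) :
    ∀ z ∈ U, G z = 0 := by
  choose q hq hqn using fun n => hg_mul (e n)
  set u := Γ (e 1) - q 1
  have hu : ∀ z ∈ U, ι u z = G z := fun z hz => by
    rw [map_sub, Pi.sub_apply, hΓe 1 z hz, hq 1 z hz, he 1 z hz]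
    ring
  set K := Cz * (C' + Cg)
  have hbound : ∀ n ≥ 1, ‖u‖ ≤ K * (‖e n‖ / (n * Cn n)) := by
    intro n hn
    have hv : ∀ z ∈ U, ι (Γ (e n) - q n) z = n * z ^ (n - 1) * ι u z := fun z hz => by
      rw [map_sub, Pi.sub_apply, hΓe n z hz, hq n z hz, he n z hz, hu z hz]
      ring
    have hvn : ‖Γ (e n) - q n‖ ≤ (C' + Cg) * ‖e n‖ := by
      linarith [norm_sub_le (Γ (e n)) (q n), hΓ n, hqn n]
    have hnCn : (0:ℝ) < n * Cn n := mul_pos (by exact_mod_cast hn) (hCn_pos n hn)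
    rw [← mul_div_assoc, le_div_iff₀ hnCn]
    calc ‖u‖ * (n * Cn n) = Cn n * (n * ‖u‖) := by ring
      _ ≤ Cz * ‖Γ (e n) - q n‖ := mul_nat_mul_norm_le hn hz_mul (hCn n hn) hv
      _ ≤ Cz * ((C' + Cg) * ‖e n‖) := by gcongr
      _ = K * ‖e n‖ := by ring
  have hu0 : u = 0 := by
    refine norm_le_zero_iff.1 (ge_of_tendsto (by simpa using hd.const_mul K) ?_)
    filter_upwards [eventually_ge_atTop 1] with n hn using hbound n hn
  intro z hz
  rw [← hu z hz, hu0, map_zero, Pi.zero_apply]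

theorem exists_generator_bound_of_eqOn_zero {U : Set ℂ} {Γ : X → X} {𝒟 : Set X}
    {g G : ℂ → ℂ} {Cg : ℝ}
    (hgen : ∀ f ∈ 𝒟, ∀ z ∈ U, ι (Γ f) z = g z * ι f z + deriv (ι f) z * G z)
    (hG : ∀ z ∈ U, G z = 0)
    (hg_mul : ∀ f : X, ∃ p : X, (∀ z ∈ U, ι p z = g z * ι f z) ∧ ‖p‖ ≤ Cg * ‖f‖)
    (hinj : ∀ u : X, (∀ z ∈ U, ι u z = 0) → u = 0) :
    ∃ C' > (0:ℝ), ∀ f ∈ 𝒟, ‖Γ f‖ ≤ C' * ‖f‖ := by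
  refine ⟨max Cg 1, by positivity, fun f hf => ?_⟩
  obtain ⟨p, hp, hpn⟩ := hg_mul f
  have hΓf : Γ f = p := sub_eq_zero.1 <| hinj _ fun z hz => by
    rw [map_sub, Pi.sub_apply, hgen f hf z hz, hG z hz, hp z hz]
    ring
  rw [hΓf]
  exact hpn.trans (mul_le_mul_of_nonneg_right (le_max_left _ _) (norm_nonneg f))

end WeightedComposition

theorem generator_bounded_iff_G_zero_general
    -- X : complex Banach space embedding continuously in Hol(𝔻)
    (X : Type*) [NormedAddCommGroup X] [NormedSpace ℂ X]
    (ι : X →ₗ[ℂ] (ℂ → ℂ))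
    (hι_hol : ∀ f : X, DifferentiableOn ℂ (ι f) (Metric.ball (0:ℂ) 1))
    (hι_emb : ∀ K ⊆ Metric.ball (0:ℂ) 1, IsCompact K →
      ∃ C > 0, ∀ f : X, ∀ z ∈ K, ‖ι f z‖ ≤ C * ‖f‖)
    -- φ : global semiflow on 𝔻 generated by the holomorphic function G
    (G : ℂ → ℂ)
    (φ : ℝ → ℂ → ℂ)
    (hφ_maps : ∀ t ≥ (0:ℝ), ∀ z ∈ Metric.ball (0:ℂ) 1, φ t z ∈ Metric.ball (0:ℂ) 1)
    (hφ_zero : ∀ z ∈ Metric.ball (0:ℂ) 1, φ 0 z = z)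
    (hφ_ode : ∀ z ∈ Metric.ball (0:ℂ) 1, ∀ t ≥ (0:ℝ),
      HasDerivWithinAt (fun s : ℝ => φ s z) (G (φ t z)) (Ici 0) t)
    -- (m_t) : family of holomorphic functions on 𝔻
    (m : ℝ → ℂ → ℂ)
    -- (S_t) : strongly continuous semigroup on X, S_t f = m_t · (f ∘ φ_t)
    (S : ℝ → X →L[ℂ] X)
    (hS_zero : S 0 = ContinuousLinearMap.id ℂ X)
    (hS_add : ∀ t ≥ (0:ℝ), ∀ s ≥ (0:ℝ), S (t + s) = (S t).comp (S s))
    (hS_rep : ∀ t ≥ (0:ℝ), ∀ f : X, ∀ z ∈ Metric.ball (0:ℂ) 1,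
      ι (S t f) z = m t z * ι f (φ t z))
    -- (Γ, 𝒟) : the infinitesimal generator of (S_t)
    (Γ : X → X) (𝒟 : Set X)
    (hΓ : ∀ f ∈ 𝒟,
      Tendsto (fun t : ℝ => (1 / (t:ℂ)) • (S t f - f)) (𝓝[>] 0) (𝓝 (Γ f)))
    -- the monomials e_n belong to D(Γ)
    (e : ℕ → X) (he : ∀ n : ℕ, ∀ z ∈ Metric.ball (0:ℂ) 1, ι (e n) z = z ^ n)
    (he𝒟 : ∀ n : ℕ, e n ∈ 𝒟)
    -- (a) : ∃ C > 0 with ‖h f‖_X ≤ C ‖h‖_∞ ‖f‖_X for bounded holomorphic h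
    (hmul : ∃ C > (0:ℝ), ∀ h : ℂ → ℂ, DifferentiableOn ℂ h (Metric.ball (0:ℂ) 1) →
      ∀ B : ℝ, (∀ z ∈ Metric.ball (0:ℂ) 1, ‖h z‖ ≤ B) →
      ∀ f : X, ∃ p : X, (∀ z ∈ Metric.ball (0:ℂ) 1, ι p z = h z * ι f z) ∧
        ‖p‖ ≤ C * B * ‖f‖)
    -- (c) : C_n ‖f‖_X ≤ ‖e_n f‖_X
    (Cn : ℕ → ℝ) (hCn_pos : ∀ n : ℕ, 1 ≤ n → 0 < Cn n)
    (hCn : ∀ n : ℕ, 1 ≤ n → ∀ f p : X,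
      (∀ z ∈ Metric.ball (0:ℂ) 1, ι p z = z ^ n * ι f z) → Cn n * ‖f‖ ≤ ‖p‖)
    -- (d) : ‖e_n‖_X / (n C_n) → 0
    (hd : Tendsto (fun n : ℕ => ‖e n‖ / (n * Cn n)) atTop (𝓝 0)) :
    -- conclusion
    ∃ g : ℂ → ℂ, DifferentiableOn ℂ g (Metric.ball (0:ℂ) 1) ∧
      (∀ t ≥ (0:ℝ), ∀ z ∈ Metric.ball (0:ℂ) 1,
        m t z = Complex.exp (∫ s in (0:ℝ)..t, g (φ s z))) ∧
      ((∃ Bg : ℝ, ∀ z ∈ Metric.ball (0:ℂ) 1, ‖g z‖ ≤ Bg) →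
        ((∃ C' > (0:ℝ), ∀ f ∈ 𝒟, ‖Γ f‖ ≤ C' * ‖f‖) ↔
          (∀ z ∈ Metric.ball (0:ℂ) 1, G z = 0))) := by
  obtain ⟨C, hC, hmulC⟩ := hmul
  have he₀ : ∀ z ∈ Metric.ball (0:ℂ) 1, ι (e 0) z = 1 := fun z hz => by simpa using he 0 z hz
  have horbit : ∀ f ∈ 𝒟, HasDerivWithinAt (fun t => S t f) (Γ f) (Ici 0) 0 :=
    fun f hf => hasDerivWithinAt_orbit hS_zero (hΓ f hf)
  have hgen : ∀ f ∈ 𝒟, ∀ z ∈ Metric.ball (0:ℂ) 1,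
      ι (Γ f) z = ι (Γ (e 0)) z * ι f z + deriv (ι f) z * G z := fun f hf z hz =>
    eval_generator_eq Metric.isOpen_ball hι_emb hι_hol hφ_maps hφ_zero hφ_ode hS_zero
      hS_rep he₀ (horbit _ (he𝒟 0)) (horbit f hf) hz
  refine ⟨ι (Γ (e 0)), hι_hol _, fun t ht z hz => weight_eq_exp_integral hι_emb
    (hι_hol _).continuousOn hφ_maps (fun z hz t ht => (hφ_ode z hz t ht).continuousWithinAt)
    hS_zero hS_add hS_rep he₀ (horbit _ (he𝒟 0)) ht hz, ?_⟩
  rintro ⟨Bg, hBg⟩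
  have hg_mul := hmulC _ (hι_hol (Γ (e 0))) Bg hBg
  constructor
  · rintro ⟨C', -, hC'⟩
    exact eqOn_zero_of_generator_bounded he
      (eval_generator_monomial Metric.isOpen_ball hgen he he𝒟) (fun n => hC' _ (he𝒟 n)) hg_mul
      (by positivity) (hmulC (fun z => z) differentiableOn_id 1
        fun z hz => (mem_ball_zero_iff.1 hz).le) hCn_pos hCn hd
  · intro hG0
    exact exists_generator_bound_of_eqOn_zero hgen hG0 hg_mul fun u hu =>
      eq_zero_of_forall_eval_eq_zero (hCn_pos 1 le_rfl) (hCn 1 le_rfl) hu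

/-- Under conditions (a)–(d) on `X ↪ Hol(𝔻)`, if the weighted
composition family `S_t f = m_t·(f∘φ_t)` is a strongly continuous semigroup with
generator `Γ` whose domain contains all monomials `e_n`, then
`m_t(z) = exp(∫₀ᵗ g(φ_s z) ds)` for a holomorphic `g`, and, when `g` is bounded,
`Γ` is a bounded operator if and only if `G ≡ 0`. -/
theorem generator_bounded_iff_G_zero
    -- X : complex Banach space embedding continuously in Hol(𝔻)
    (X : Type*) [NormedAddCommGroup X] [NormedSpace ℂ X] [CompleteSpace X]
    (ι : X →ₗ[ℂ] (ℂ → ℂ)) (hι_inj : Function.Injective ι)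
    (hι_hol : ∀ f : X, DifferentiableOn ℂ (ι f) (Metric.ball (0:ℂ) 1))
    (hι_emb : ∀ K ⊆ Metric.ball (0:ℂ) 1, IsCompact K →
      ∃ C > 0, ∀ f : X, ∀ z ∈ K, ‖ι f z‖ ≤ C * ‖f‖)
    -- φ : global semiflow on 𝔻 generated by the holomorphic function G
    (G : ℂ → ℂ) (hG : DifferentiableOn ℂ G (Metric.ball (0:ℂ) 1))
    (φ : ℝ → ℂ → ℂ)
    (hφ_maps : ∀ t ≥ (0:ℝ), ∀ z ∈ Metric.ball (0:ℂ) 1, φ t z ∈ Metric.ball (0:ℂ) 1)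
    (hφ_zero : ∀ z ∈ Metric.ball (0:ℂ) 1, φ 0 z = z)
    (hφ_add : ∀ t ≥ (0:ℝ), ∀ s ≥ (0:ℝ), ∀ z ∈ Metric.ball (0:ℂ) 1,
      φ (t + s) z = φ t (φ s z))
    (hφ_hol : ∀ t ≥ (0:ℝ), DifferentiableOn ℂ (fun z => φ t z) (Metric.ball (0:ℂ) 1))
    (hφ_cont : ∀ z ∈ Metric.ball (0:ℂ) 1, ContinuousOn (fun t : ℝ => φ t z) (Ici 0))
    (hφ_ode : ∀ z ∈ Metric.ball (0:ℂ) 1, ∀ t ≥ (0:ℝ),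
      HasDerivWithinAt (fun s : ℝ => φ s z) (G (φ t z)) (Ici 0) t)
    -- (m_t) : family of holomorphic functions on 𝔻
    (m : ℝ → ℂ → ℂ)
    (hm_hol : ∀ t ≥ (0:ℝ), DifferentiableOn ℂ (m t) (Metric.ball (0:ℂ) 1))
    -- (S_t) : strongly continuous semigroup on X, S_t f = m_t · (f ∘ φ_t)
    (S : ℝ → X →L[ℂ] X)
    (hS_zero : S 0 = ContinuousLinearMap.id ℂ X)
    (hS_add : ∀ t ≥ (0:ℝ), ∀ s ≥ (0:ℝ), S (t + s) = (S t).comp (S s))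
    (hS_cont : ∀ f : X, Tendsto (fun t : ℝ => S t f) (𝓝[>] 0) (𝓝 f))
    (hS_rep : ∀ t ≥ (0:ℝ), ∀ f : X, ∀ z ∈ Metric.ball (0:ℂ) 1,
      ι (S t f) z = m t z * ι f (φ t z))
    -- (Γ, 𝒟) : the infinitesimal generator of (S_t)
    (Γ : X → X) (𝒟 : Set X)
    (h𝒟 : ∀ f : X, f ∈ 𝒟 ↔
      ∃ L : X, Tendsto (fun t : ℝ => (1 / (t:ℂ)) • (S t f - f)) (𝓝[>] 0) (𝓝 L))
    (hΓ : ∀ f ∈ 𝒟,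
      Tendsto (fun t : ℝ => (1 / (t:ℂ)) • (S t f - f)) (𝓝[>] 0) (𝓝 (Γ f)))
    -- the monomials e_n belong to D(Γ)
    (e : ℕ → X) (he : ∀ n : ℕ, ∀ z ∈ Metric.ball (0:ℂ) 1, ι (e n) z = z ^ n)
    (he𝒟 : ∀ n : ℕ, e n ∈ 𝒟)
    -- (a) : ∃ C > 0 with ‖h f‖_X ≤ C ‖h‖_∞ ‖f‖_X for bounded holomorphic h
    (hmul : ∃ C > (0:ℝ), ∀ h : ℂ → ℂ, DifferentiableOn ℂ h (Metric.ball (0:ℂ) 1) →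
      ∀ B : ℝ, (∀ z ∈ Metric.ball (0:ℂ) 1, ‖h z‖ ≤ B) →
      ∀ f : X, ∃ p : X, (∀ z ∈ Metric.ball (0:ℂ) 1, ι p z = h z * ι f z) ∧
        ‖p‖ ≤ C * B * ‖f‖)
    -- (b) : e_n f ∈ X for all f ∈ X, n ∈ ℕ
    (hmon : ∀ n : ℕ, 1 ≤ n → ∀ f : X,
      ∃ p : X, ∀ z ∈ Metric.ball (0:ℂ) 1, ι p z = z ^ n * ι f z)
    -- (c) : C_n ‖f‖_X ≤ ‖e_n f‖_X
    (Cn : ℕ → ℝ) (hCn_pos : ∀ n : ℕ, 1 ≤ n → 0 < Cn n)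
    (hCn : ∀ n : ℕ, 1 ≤ n → ∀ f p : X,
      (∀ z ∈ Metric.ball (0:ℂ) 1, ι p z = z ^ n * ι f z) → Cn n * ‖f‖ ≤ ‖p‖)
    -- (d) : ‖e_n‖_X / (n C_n) → 0
    (hd : Tendsto (fun n : ℕ => ‖e n‖ / (n * Cn n)) atTop (𝓝 0)) :
    -- conclusion
    ∃ g : ℂ → ℂ, DifferentiableOn ℂ g (Metric.ball (0:ℂ) 1) ∧
      (∀ t ≥ (0:ℝ), ∀ z ∈ Metric.ball (0:ℂ) 1,
        m t z = Complex.exp (∫ s in (0:ℝ)..t, g (φ s z))) ∧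
      ((∃ Bg : ℝ, ∀ z ∈ Metric.ball (0:ℂ) 1, ‖g z‖ ≤ Bg) →
        ((∃ C' > (0:ℝ), ∀ f ∈ 𝒟, ‖Γ f‖ ≤ C' * ‖f‖) ↔
          (∀ z ∈ Metric.ball (0:ℂ) 1, G z = 0))) :=
  generator_bounded_iff_G_zero_general X ι hι_hol hι_emb G φ hφ_maps hφ_zero hφ_ode m S hS_zero
    hS_add hS_rep Γ 𝒟 hΓ e he he𝒟 hmul Cn hCn_pos hCn hd
end

section
/- Let α ≥ 0 be a real number, set w_0 = 0 and w_n = n·n!/((α+1)(α+2)⋯(α+n)) for n ≥ 1, and for a sequence a = (a_n)_{n≥0} of complex numbers define N(a)² = Σ_{n≥0} w_n|a_n|² (the square of the D_α-norm of f = Σ a_n zⁿ). Then for every integer k ≥ 1 there exists a constant C_k > 0 such that for every sequence a with N(a) < ∞ one has Σ_{n≥0} w_{n+k}|a_n|² < ∞ (i.e. e_k f ∈ D_α, where e_k f has coefficient sequence shifted by k) and C_k² N(a)² ≤ Σ_{n≥0} w_{n+k}|a_n|²; moreover the constants C_k can be chosen so that lim_{k→∞} √(w_k)/(k C_k) = 0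 (equivalently ‖e_k‖_{D_α}/(k C_k) → 0, since ‖e_k‖²_{D_α} = w_k). -/
/-!
Write `w_n = n · v_n` with `v_n = ∏_{j<n} (j+1)/(α+j+1)`. Shifting multiplies `v_n` by
`∏_{j<k} (n+j+1)/(α+n+j+1)`, a product of factors in `(0, 1]` that, since `t ↦ t/(α+t)` increases,
dominates `v_k`. Hence `v_k w_n ≤ w_{n+k} ≤ (k+1) w_n` for `n ≥ 1`, and `C_k = √v_k` works, with
`√w_k / (k C_k) = 1/√k`.
-/

open Set Filter Topology Finset

noncomputable def pochRatio (α : ℝ) (n : ℕ) : ℝ :=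
  ∏ j ∈ range n, ((j + 1) / (α + j + 1))

noncomputable def dirichletWeight (α : ℝ) (n : ℕ) : ℝ :=
  n * pochRatio α n

theorem pochRatio_eq_factorial_div (α : ℝ) (n : ℕ) :
    pochRatio α n = n.factorial / ∏ j ∈ range n, (α + j + 1) := by
  rw [pochRatio, prod_div_distrib, Nat.factorial_eq_prod_range_add_one]
  push_cast
  rfl

theorem eq_dirichletWeight {α : ℝ} {w : ℕ → ℝ} (hw0 : w 0 = 0)
    (hw : ∀ n : ℕ, 1 ≤ n → w n = n * n.factorial / ∏ j ∈ range n, (α + j + 1)) :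
    w = dirichletWeight α := by
  ext n
  rcases Nat.eq_zero_or_pos n with rfl | hn
  · simp [hw0, dirichletWeight]
  · rw [hw n hn, dirichletWeight, pochRatio_eq_factorial_div, mul_div_assoc]

theorem pochRatio_add (α : ℝ) (n k : ℕ) :
    pochRatio α (n + k) = pochRatio α n * ∏ j ∈ range k, ((n + j + 1) / (α + n + j + 1)) := by
  rw [pochRatio, prod_range_add]
  push_cast
  simp only [← add_assoc]
  rfl

section

variable {α : ℝ}

theorem pochRatio_pos (hα : 0 ≤ α) (n : ℕ) : 0 < pochRatio α n :=
  prod_pos fun j _ => by positivity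

theorem pochRatio_add_le (hα : 0 ≤ α) (n k : ℕ) : pochRatio α (n + k) ≤ pochRatio α n := by
  rw [pochRatio_add]
  refine mul_le_of_le_one_right (pochRatio_pos hα n).le (prod_le_one (fun j _ => by positivity)
    fun j _ => (div_le_one (by positivity)).2 (by linarith))

theorem pochRatio_mul_le_add (hα : 0 ≤ α) (n k : ℕ) :
    pochRatio α k * pochRatio α n ≤ pochRatio α (n + k) := by
  rw [pochRatio_add, mul_comm]
  refine mul_le_mul_of_nonneg_left (prod_le_prod (fun j _ => by positivity) fun j _ => ?_)
    (pochRatio_pos hα n).le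
  rw [div_le_div_iff₀ (by positivity) (by positivity)]
  nlinarith [(Nat.cast_nonneg n : (0 : ℝ) ≤ n)]

theorem pochRatio_mul_dirichletWeight_le (hα : 0 ≤ α) (n k : ℕ) :
    pochRatio α k * dirichletWeight α n ≤ dirichletWeight α (n + k) := by
  unfold dirichletWeight
  calc pochRatio α k * (n * pochRatio α n) = n * (pochRatio α k * pochRatio α n) := by ring
    _ ≤ (n + k : ℕ) * pochRatio α (n + k) :=
      mul_le_mul (by simp) (pochRatio_mul_le_add hα n k)
        (mul_pos (pochRatio_pos hα k) (pochRatio_pos hα n)).le (by positivity)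

theorem dirichletWeight_add_le (hα : 0 ≤ α) {n : ℕ} (hn : 1 ≤ n) (k : ℕ) :
    dirichletWeight α (n + k) ≤ (k + 1) * dirichletWeight α n := by
  unfold dirichletWeight
  have hnk : ((n + k : ℕ) : ℝ) ≤ (k + 1) * n := by
    have : (1 : ℝ) ≤ n := by exact_mod_cast hn
    push_cast
    nlinarith [(Nat.cast_nonneg k : (0 : ℝ) ≤ k)]
  calc ((n + k : ℕ) : ℝ) * pochRatio α (n + k) ≤ (k + 1) * n * pochRatio α n :=
        mul_le_mul hnk (pochRatio_add_le hα n k) (pochRatio_pos hα _).le (by positivity)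
    _ = (k + 1) * (n * pochRatio α n) := by ring

theorem dirichletWeight_nonneg (hα : 0 ≤ α) (n : ℕ) : 0 ≤ dirichletWeight α n :=
  mul_nonneg n.cast_nonneg (pochRatio_pos hα n).le

theorem Summable.dirichletWeight_shift (hα : 0 ≤ α) {x : ℕ → ℝ} (hx : ∀ n, 0 ≤ x n)
    (hs : Summable fun n => dirichletWeight α n * x n) (k : ℕ) :
    Summable fun n => dirichletWeight α (n + k) * x n := by
  refine Summable.of_norm_bounded_eventually_nat (hs.mul_left ((k : ℝ) + 1)) ?_
  filter_upwards [eventually_ge_atTop 1] with n hn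
  rw [Real.norm_of_nonneg (mul_nonneg (dirichletWeight_nonneg hα _) (hx n)), ← mul_assoc]
  exact mul_le_mul_of_nonneg_right (dirichletWeight_add_le hα hn k) (hx n)

theorem sqrt_dirichletWeight_div (hα : 0 ≤ α) (k : ℕ) :
    √(dirichletWeight α k) / (k * √(pochRatio α k)) = (√k)⁻¹ := by
  have hv : 0 < √(pochRatio α k) := Real.sqrt_pos.2 (pochRatio_pos hα k)
  rw [dirichletWeight, Real.sqrt_mul k.cast_nonneg, mul_div_mul_right _ _ hv.ne',
    Real.sqrt_div_self]

end

/-- For `α ≥ 0`, `w_0 = 0`, `w_n = n·n!/((α+1)⋯(α+n))` (n ≥ 1) and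
`N(a)² = Σ_{n≥0} w_n|a_n|²`, for every `k ≥ 1` there is `C_k > 0` such that whenever
`N(a) < ∞`, the shifted series `Σ_n w_{n+k}|a_n|²` is finite (i.e. `e_k f ∈ D_α`) and
`C_k² N(a)² ≤ Σ_n w_{n+k}|a_n|²`; moreover the `C_k` can be chosen so that
`√(w_k)/(k C_k) → 0`, i.e. `‖e_k‖_{D_α}/(k C_k) → 0`. -/
theorem dirichlet_shift_lower_bound
    (α : ℝ) (hα : 0 ≤ α)
    (w : ℕ → ℝ) (hw0 : w 0 = 0)
    (hw : ∀ n : ℕ, 1 ≤ n →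
      w n = n * n.factorial / ∏ j ∈ Finset.range n, (α + j + 1)) :
    ∃ C : ℕ → ℝ,
      (∀ k : ℕ, 1 ≤ k → 0 < C k) ∧
      (∀ k : ℕ, 1 ≤ k → ∀ a : ℕ → ℂ,
        Summable (fun n : ℕ => w n * ‖a n‖ ^ 2) →
          Summable (fun n : ℕ => w (n + k) * ‖a n‖ ^ 2) ∧
          (C k) ^ 2 * (∑' n : ℕ, w n * ‖a n‖ ^ 2) ≤
            ∑' n : ℕ, w (n + k) * ‖a n‖ ^ 2) ∧
      Tendsto (fun k : ℕ => Real.sqrt (w k) / (k * C k)) atTop (𝓝 0) := by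
  obtain rfl := eq_dirichletWeight hw0 hw
  refine ⟨fun k => √(pochRatio α k), fun k _ => Real.sqrt_pos.2 (pochRatio_pos hα k),
    fun k _ a hs => ?_, ?_⟩
  · have hs_shift := hs.dirichletWeight_shift hα (fun n => by positivity) k
    refine ⟨hs_shift, ?_⟩
    rw [Real.sq_sqrt (pochRatio_pos hα k).le, ← tsum_mul_left]
    refine (hs.mul_left _).tsum_le_tsum (fun n => ?_) hs_shift
    rw [← mul_assoc]
    exact mul_le_mul_of_nonneg_right (pochRatio_mul_dirichletWeight_le hα n k) (by positivity)
  · simp only [sqrt_dirichletWeight_div hα]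
    exact tendsto_inv_atTop_zero.comp (Real.tendsto_sqrt_atTop.comp tendsto_natCast_atTop_atTop)
end

section
/- Let Ω be a non-empty open simply connected subset of ℂ, X a complex Banach space embedding continuously in Hol(Ω), g ∈ Hol(Ω), and G ∈ Hol(Ω). For z ∈ Ω let φ(·,z) : [0, τ(z)) → Ω denote the unique maximal solution of u′(t) = G(u(t)), u(0) = z. Let (S_t)_{t≥0} be a strongly continuous semigroup on X whose infinitesimal generator (Γ, D(Γ)) satisfies Γf = g f + G f′ for all f ∈ D(Γ). Then for every f ∈ X, every z ∈ Ω and every t with 0 ≤ t < τ(z), (S_t f)(z) = m_t(z)·f(φ(t,z)), where m_t(z) = exp(∫₀ᵗ g(φ(s,z)) ds). -/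
/-!
For `f` in the domain of the generator, the function
`s ↦ m_s(z) · (S_{t-s} f)(φ(s,z))` has right derivative
`m_s(z) · (g · S_{t-s} f - Γ S_{t-s} f + G · (S_{t-s} f)′)(φ(s,z)) = 0` on `[0, t)`, since `Γ`
commutes with `S_{t-s}`; comparing its values at `s = 0` and `s = t` gives the formula.
The general case follows by density of the domain, which contains the averages
`h⁻¹ ∫₀ʰ S_u f du`, because point evaluations are continuous on `X`.
-/

open Set Filter Topology ENNReal MeasureTheory

lemma hasDerivWithinAt_integral_Ici_of_continuousOn {E : Type*} [NormedAddCommGroup E]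
    [NormedSpace ℝ E] [CompleteSpace E] {f : ℝ → E} {a b c : ℝ} (hf : ContinuousOn f (Icc a c))
    (hb : b ∈ Ico a c) : HasDerivWithinAt (fun u => ∫ v in a..u, f v) (f b) (Ici b) b := by
  have hmem : Icc a c ∈ 𝓝[>] b :=
    mem_of_superset (Ioc_mem_nhdsGT hb.2) (Ioc_subset_Icc_self.trans (Icc_subset_Icc_left hb.1))
  exact intervalIntegral.integral_hasDerivWithinAt_right
    ((hf.mono (Icc_subset_Icc_right hb.2.le)).intervalIntegrable_of_Icc hb.1)
    ((hf.stronglyMeasurableAtFilter_nhdsWithin measurableSet_Icc b).filter_mono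
      (nhdsWithin_le_of_mem hmem))
    ((hf b ⟨hb.1, hb.2.le⟩).mono_of_mem_nhdsWithin hmem)

structure IsC0Semigroup {X : Type*} [NormedAddCommGroup X] [NormedSpace ℂ X]
    (S : ℝ → X →L[ℂ] X) : Prop where
  map_zero : S 0 = ContinuousLinearMap.id ℂ X
  map_add : ∀ t ≥ (0:ℝ), ∀ s ≥ (0:ℝ), S (t + s) = (S t).comp (S s)
  tendsto_nhdsGT_zero : ∀ f : X, Tendsto (fun t : ℝ => S t f) (𝓝[>] 0) (𝓝 f)

namespace IsC0Semigroup

variable {X : Type*} [NormedAddCommGroup X] [NormedSpace ℂ X] {S : ℝ → X →L[ℂ] X}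

lemma apply_zero (hS : IsC0Semigroup S) (x : X) : S 0 x = x := by
  rw [hS.map_zero]; rfl

lemma apply_add (hS : IsC0Semigroup S) {t s : ℝ} (ht : 0 ≤ t) (hs : 0 ≤ s) (x : X) :
    S (t + s) x = S t (S s x) := by
  rw [hS.map_add t ht s hs]; rfl

lemma exists_norm_le_of_mem_Ioc [CompleteSpace X] (hS : IsC0Semigroup S) :
    ∃ δ > 0, ∃ C, ∀ s ∈ Ioc 0 δ, ‖S s‖ ≤ C := by
  by_contra! hunbdd
  choose s hs hlarge using fun n : ℕ => hunbdd (1 / (n + 1)) Nat.one_div_pos_of_nat n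
  have hs0 : Tendsto s atTop (𝓝[>] 0) :=
    tendsto_nhdsWithin_of_tendsto_nhds_of_eventually_within _
      (squeeze_zero (fun n => (hs n).1.le) (fun n => (hs n).2)
        tendsto_one_div_add_atTop_nhds_zero_nat)
      (Eventually.of_forall fun n => (hs n).1)
  obtain ⟨C, hC⟩ := banach_steinhaus fun x => by
    obtain ⟨C, hC⟩ := ((hS.tendsto_nhdsGT_zero x).comp hs0).norm.bddAbove_range
    exact ⟨C, fun n => hC (mem_range_self n)⟩
  obtain ⟨n, hn⟩ := exists_nat_gt C
  exact (hn.trans (hlarge n)).not_ge (hC n)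

lemma exists_norm_le_of_mem_Icc [CompleteSpace X] (hS : IsC0Semigroup S) (b : ℝ) :
    ∃ M, ∀ s ∈ Icc 0 b, ‖S s‖ ≤ M := by
  obtain ⟨δ, hδ, C, hC⟩ := hS.exists_norm_le_of_mem_Ioc
  set M := max C 1
  have hM : ∀ s ∈ Icc 0 δ, ‖S s‖ ≤ M := by
    rintro s ⟨hs0, hsδ⟩
    rcases hs0.eq_or_lt with rfl | hs0
    · exact hS.map_zero ▸ ContinuousLinearMap.norm_id_le.trans (le_max_right _ _)
    · exact (hC s ⟨hs0, hsδ⟩).trans (le_max_left _ _)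
  have hpow : ∀ n : ℕ, ∀ s ∈ Icc 0 ((n + 1) * δ), ‖S s‖ ≤ M ^ (n + 1) := by
    intro n
    induction n with
    | zero => simpa using hM
    | succ n ih =>
      rintro s ⟨hs0, hsn⟩
      have hsplit : S s = (S (s - min s δ)).comp (S (min s δ)) := by
        rw [← hS.map_add _ (sub_nonneg.2 (min_le_left _ _)) _ (le_min hs0 hδ.le), sub_add_cancel]
      have hrest : s - min s δ ∈ Icc 0 ((n + 1) * δ) := by
        push_cast at hsn
        constructor <;> cases min_cases s δ <;> nlinarith
      calc ‖S s‖ ≤ ‖S (s - min s δ)‖ * ‖S (min s δ)‖ := hsplit ▸ (S _).opNorm_comp_le _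
        _ ≤ M ^ (n + 1) * M :=
          mul_le_mul (ih _ hrest) (hM _ ⟨le_min hs0 hδ.le, min_le_right _ _⟩) (norm_nonneg _)
            (by positivity)
        _ = M ^ (n + 1 + 1) := (pow_succ _ _).symm
  obtain ⟨n, hn⟩ := exists_nat_ge (b / δ)
  refine ⟨M ^ (n + 1), fun s hs => hpow n s ⟨hs.1, hs.2.trans ?_⟩⟩
  rw [div_le_iff₀ hδ] at hn
  nlinarith

lemma tendsto_nhdsGE_zero (hS : IsC0Semigroup S) (x : X) :
    Tendsto (fun t => S t x) (𝓝[≥] 0) (𝓝 x) := by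
  have h : ContinuousWithinAt (fun t => S t x) (Ioi 0) 0 := by
    rw [ContinuousWithinAt, hS.apply_zero]; exact hS.tendsto_nhdsGT_zero x
  simpa only [ContinuousWithinAt, hS.apply_zero] using continuousWithinAt_Ioi_iff_Ici.1 h

lemma continuousOn_orbit [CompleteSpace X] (hS : IsC0Semigroup S) (x : X) :
    ContinuousOn (fun t => S t x) (Ici 0) := by
  intro t₀ ht₀
  rw [← Icc_union_Ici_eq_Ici ht₀, continuousWithinAt_union]
  constructor
  · obtain ⟨M, hM⟩ := hS.exists_norm_le_of_mem_Icc t₀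
    have hback : Tendsto (fun s => t₀ - s) (𝓝[Icc 0 t₀] t₀) (𝓝[≥] 0) := by
      simpa using ((continuous_sub_left t₀).continuousWithinAt (x := t₀)).tendsto_nhdsWithin
        (t := Ici 0)
        fun s (hs : s ∈ Icc 0 t₀) => sub_nonneg.2 hs.2
    have hlim := (tendsto_iff_norm_sub_tendsto_zero.1
      ((hS.tendsto_nhdsGE_zero x).comp hback)).const_mul M
    rw [mul_zero] at hlim
    rw [ContinuousWithinAt, tendsto_iff_norm_sub_tendsto_zero]
    refine squeeze_zero' (Eventually.of_forall fun _ => norm_nonneg _)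
      (eventually_nhdsWithin_of_forall fun s hs => ?_) hlim
    calc ‖S s x - S t₀ x‖ = ‖S s (S (t₀ - s) x - x)‖ := by
          rw [map_sub, ← hS.apply_add hs.1 (sub_nonneg.2 hs.2), add_sub_cancel, norm_sub_rev]
      _ ≤ M * ‖S (t₀ - s) x - x‖ := (S s).le_of_opNorm_le (hM s hs) _
  · have hfwd : Tendsto (fun s => s - t₀) (𝓝[≥] t₀) (𝓝[≥] 0) := by
      simpa using ((continuous_sub_right t₀).continuousWithinAt (x := t₀)).tendsto_nhdsWithin
        (t := Ici 0)
        fun s (hs : s ∈ Ici t₀) => sub_nonneg.2 hs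
    refine (((S t₀).continuous.tendsto x).comp ((hS.tendsto_nhdsGE_zero x).comp hfwd)).congr'
      (eventually_nhdsWithin_of_forall fun s hs => ?_)
    simp only [Function.comp_apply]
    rw [← hS.apply_add ht₀ (sub_nonneg.2 hs), add_sub_cancel]

lemma tendsto_apply [CompleteSpace X] (hS : IsC0Semigroup S) {α : Type*} {l : Filter α}
    {a : α → ℝ} {y : α → X} {r : ℝ} {y₀ : X} (hr : 0 ≤ r) (ha : Tendsto a l (𝓝[Ici 0] r))
    (hy : Tendsto y l (𝓝 y₀)) : Tendsto (fun i => S (a i) (y i)) l (𝓝 (S r y₀)) := by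
  obtain ⟨M, hM⟩ := hS.exists_norm_le_of_mem_Icc (r + 1)
  have hbdd : ∀ᶠ i in l, a i ∈ Icc 0 (r + 1) := ha.eventually <| by
    filter_upwards [inter_mem_nhdsWithin (Ici 0) (Iio_mem_nhds (lt_add_one r))] with s hs
    exact ⟨hs.1, hs.2.le⟩
  have hsmall : Tendsto (fun i => S (a i) (y i - y₀)) l (𝓝 0) :=
    squeeze_zero_norm' (hbdd.mono fun i hi => (S (a i)).le_of_opNorm_le (hM _ hi) _)
      (by simpa using (tendsto_iff_norm_sub_tendsto_zero.1 hy).const_mul M)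
  simpa using hsmall.add ((hS.continuousOn_orbit y₀ r hr).tendsto.comp ha)

lemma tendsto_smul_sub_iff_hasDerivWithinAt (hS : IsC0Semigroup S) {x L : X} :
    Tendsto (fun t : ℝ => (1 / (t:ℂ)) • (S t x - x)) (𝓝[>] 0) (𝓝 L) ↔
      HasDerivWithinAt (fun t => S t x) L (Ici 0) 0 := by
  rw [← hasDerivWithinAt_Ioi_iff_Ici, hasDerivWithinAt_iff_tendsto_slope,
    sdiff_singleton_eq_self self_notMem_Ioi]
  refine tendsto_congr fun t => ?_
  rw [slope_def_module, sub_zero, hS.apply_zero, one_div, ← Complex.ofReal_inv, Complex.coe_smul]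

lemma hasDerivWithinAt_orbit [CompleteSpace X] (hS : IsC0Semigroup S) {x v : X}
    (hx : HasDerivWithinAt (fun t => S t x) v (Ici 0) 0) {r : ℝ} (hr : 0 ≤ r) :
    HasDerivWithinAt (fun t => S t x) (S r v) (Ici 0) r := by
  rw [hasDerivWithinAt_iff_tendsto_slope] at hx ⊢
  -- on either side of `r` the slope is `S` applied to a difference quotient at `0`
  have hslope : ∀ u ∈ Ici 0 \ {r},
      slope (fun t => S t x) r u = S (min u r) (slope (fun t => S t x) 0 |u - r|) := by
    rintro u ⟨hu, hur⟩
    simp only [slope_def_module, sub_zero, hS.apply_zero, ContinuousLinearMap.map_smul_of_tower,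
      map_sub]
    rcases lt_or_gt_of_ne hur with hlt | hgt
    · rw [min_eq_left hlt.le, abs_of_neg (sub_neg.2 hlt), ← hS.apply_add hu (by linarith),
        show u + -(u - r) = r by ring, inv_neg, neg_smul, ← smul_neg, neg_sub]
    · rw [min_eq_right hgt.le, abs_of_pos (sub_pos.2 hgt), ← hS.apply_add hr (by linarith),
        add_sub_cancel]
  refine (tendsto_congr' (eventually_nhdsWithin_of_forall hslope)).2
    (hS.tendsto_apply hr ?_ (hx.comp ?_))
  · refine tendsto_nhdsWithin_of_tendsto_nhds_of_eventually_within _ ?_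
      (eventually_nhdsWithin_of_forall fun u hu => le_min hu.1 hr)
    simpa using
      ((continuous_id.min (continuous_const (y := r))).tendsto r).mono_left nhdsWithin_le_nhds
  · refine tendsto_nhdsWithin_of_tendsto_nhds_of_eventually_within _ ?_
      (eventually_nhdsWithin_of_forall fun u hu =>
        ⟨abs_nonneg (u - r), by simpa [sub_eq_zero] using hu.2⟩)
    simpa using ((continuous_sub_right r).abs.tendsto r).mono_left nhdsWithin_le_nhds

lemma hasDerivWithinAt_orbit_apply (hS : IsC0Semigroup S) {x v : X}
    (hx : HasDerivWithinAt (fun t => S t x) v (Ici 0) 0) {r : ℝ} (hr : 0 ≤ r) :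
    HasDerivWithinAt (fun t => S t (S r x)) (S r v) (Ici 0) 0 :=
  (((S r).restrictScalars ℝ).hasFDerivAt.comp_hasDerivWithinAt 0 hx).congr_of_mem (fun t ht => by
    simp only [Function.comp_apply, ContinuousLinearMap.coe_restrictScalars']
    rw [← hS.apply_add ht hr, ← hS.apply_add hr ht, add_comm]) (mem_Ici.2 le_rfl)

lemma intervalIntegrable_orbit [CompleteSpace X] (hS : IsC0Semigroup S) (x : X) {a b : ℝ}
    (ha : 0 ≤ a) (hb : 0 ≤ b) : IntervalIntegrable (fun t => S t x) volume a b :=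
  ((hS.continuousOn_orbit x).mono fun _ hu => (le_inf ha hb).trans hu.1).intervalIntegrable

lemma hasDerivWithinAt_integral_orbit [CompleteSpace X] (hS : IsC0Semigroup S) (x : X) {s : ℝ}
    (hs : 0 ≤ s) : HasDerivWithinAt (fun u => ∫ v in 0..u, S v x) (S s x) (Ici s) s :=
  hasDerivWithinAt_integral_Ici_of_continuousOn
    ((hS.continuousOn_orbit x).mono Icc_subset_Ici_self) (c := s + 1) ⟨hs, lt_add_one s⟩

lemma apply_integral_orbit [CompleteSpace X] (hS : IsC0Semigroup S) (x : X) {t h : ℝ}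
    (ht : 0 ≤ t) (hh : 0 ≤ h) :
    S t (∫ u in 0..h, S u x) = (∫ u in 0..t + h, S u x) - ∫ u in 0..t, S u x := by
  have hshift : ∫ u in 0..h, S (t + u) x = ∫ u in t..t + h, S u x := by
    simpa using intervalIntegral.integral_comp_add_left (fun u => S u x) t (a := 0) (b := h)
  rw [← (S t).intervalIntegral_comp_comm (hS.intervalIntegrable_orbit x le_rfl hh),
    intervalIntegral.integral_interval_sub_left (hS.intervalIntegrable_orbit x le_rfl (by linarith))
      (hS.intervalIntegrable_orbit x le_rfl ht),
    ← hshift]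
  refine intervalIntegral.integral_congr fun u hu => ?_
  rw [uIcc_of_le hh] at hu
  exact (hS.apply_add ht hu.1 x).symm

lemma hasDerivWithinAt_orbit_integral [CompleteSpace X] (hS : IsC0Semigroup S) (x : X) {h : ℝ}
    (hh : 0 ≤ h) :
    HasDerivWithinAt (fun t => S t (∫ u in 0..h, S u x)) (S h x - x) (Ici 0) 0 := by
  have hshift : HasDerivWithinAt (fun t => ∫ u in 0..t + h, S u x) (S h x) (Ici 0) 0 := by
    simpa only [Function.comp_def, id, one_smul] using
      (hS.hasDerivWithinAt_integral_orbit x hh).scomp_of_eq 0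
      (((hasDerivAt_id 0).add_const h).hasDerivWithinAt (s := Ici 0))
      (fun t (ht : 0 ≤ t) => show id t + h ∈ Ici h by simpa using ht) (by simp)
  have hstart := hS.hasDerivWithinAt_integral_orbit x le_rfl
  rw [hS.apply_zero] at hstart
  exact (hshift.sub hstart).congr_of_mem (fun t ht => hS.apply_integral_orbit x ht hh)
    (mem_Ici.2 le_rfl)

lemma dense_setOf_hasDerivWithinAt [CompleteSpace X] (hS : IsC0Semigroup S) :
    Dense {x : X | ∃ v, HasDerivWithinAt (fun t => S t x) v (Ici 0) 0} := by
  intro x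
  have hslope := hS.hasDerivWithinAt_integral_orbit x le_rfl
  rw [hS.apply_zero, ← hasDerivWithinAt_Ioi_iff_Ici, hasDerivWithinAt_iff_tendsto_slope,
    sdiff_singleton_eq_self self_notMem_Ioi] at hslope
  refine mem_closure_of_tendsto hslope (eventually_nhdsWithin_of_forall fun h (hh : 0 < h) =>
    ⟨h⁻¹ • (S h x - x), ?_⟩)
  convert (hS.hasDerivWithinAt_orbit_integral x hh.le).const_smul h⁻¹ using 1
  ext t
  simp [slope_def_module]

end IsC0Semigroup

structure IsContinuousIntoHol {X : Type*} [NormedAddCommGroup X] [NormedSpace ℂ X] (Ω : Set ℂ)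
    (ι : X →ₗ[ℂ] (ℂ → ℂ)) : Prop where
  differentiableOn : ∀ f : X, DifferentiableOn ℂ (ι f) Ω
  norm_le : ∀ K ⊆ Ω, IsCompact K → ∃ C > 0, ∀ f : X, ∀ z ∈ K, ‖ι f z‖ ≤ C * ‖f‖

namespace IsContinuousIntoHol

variable {X : Type*} [NormedAddCommGroup X] [NormedSpace ℂ X] {Ω : Set ℂ} {ι : X →ₗ[ℂ] (ℂ → ℂ)}

lemma tendsto_apply_apply (hι : IsContinuousIntoHol Ω ι) (hΩ : IsOpen Ω) {α : Type*} {l : Filter α}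
    {x : α → X} {x₀ : X} {w : α → ℂ} {w₀ : ℂ} (hx : Tendsto x l (𝓝 x₀))
    (hw : Tendsto w l (𝓝 w₀)) (hw₀ : w₀ ∈ Ω) :
    Tendsto (fun i => ι (x i) (w i)) l (𝓝 (ι x₀ w₀)) := by
  obtain ⟨r, hr, hball⟩ := Metric.nhds_basis_closedBall.mem_iff.1 (hΩ.mem_nhds hw₀)
  obtain ⟨C, -, hC⟩ := hι.norm_le _ hball (isCompact_closedBall w₀ r)
  have hsmall : Tendsto (fun i => ι (x i - x₀) (w i)) l (𝓝 0) :=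
    squeeze_zero_norm' ((hw.eventually (Metric.closedBall_mem_nhds w₀ hr)).mono
      fun i hi => hC _ _ hi) (by simpa using (tendsto_iff_norm_sub_tendsto_zero.1 hx).const_mul C)
  have hcont : ContinuousAt (ι x₀) w₀ :=
    ((hι.differentiableOn x₀).differentiableAt (hΩ.mem_nhds hw₀)).continuousAt
  simpa using hsmall.add (hcont.tendsto.comp hw)

lemma continuous_apply (hι : IsContinuousIntoHol Ω ι) (hΩ : IsOpen Ω) {w : ℂ} (hw : w ∈ Ω) :
    Continuous fun f : X => ι f w :=
  continuous_iff_continuousAt.2 fun _ => hι.tendsto_apply_apply hΩ tendsto_id tendsto_const_nhds hw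

lemma hasDerivWithinAt_apply_apply (hι : IsContinuousIntoHol Ω ι) (hΩ : IsOpen Ω) {c : ℝ → X}
    {c' : X} {w : ℝ → ℂ} {w' : ℂ} {s : Set ℝ} {a : ℝ} (hc : HasDerivWithinAt c c' s a)
    (hw : HasDerivWithinAt w w' s a) (ha : w a ∈ Ω) :
    HasDerivWithinAt (fun r => ι (c r) (w r)) (ι c' (w a) + deriv (ι (c a)) (w a) * w') s a := by
  have hmoving : HasDerivWithinAt (fun r => ι (c r - c a) (w r)) (ι c' (w a)) s a := by
    rw [hasDerivWithinAt_iff_tendsto_slope] at hc ⊢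
    refine (hι.tendsto_apply_apply hΩ hc
      (hw.continuousWithinAt.tendsto.mono_left (nhdsWithin_mono _ sdiff_subset)) ha).congr
      fun r => ?_
    simp [slope_def_module]
  have hfrozen : HasDerivWithinAt (fun r => ι (c a) (w r)) (deriv (ι (c a)) (w a) * w') s a :=
    ((hι.differentiableOn (c a)).differentiableAt (hΩ.mem_nhds ha)).hasDerivAt.comp_hasDerivWithinAt
      a hw
  simpa only [map_sub, Pi.sub_apply, Pi.add_def, sub_add_cancel] using hmoving.add hfrozen

theorem apply_eq_exp_integral_mul_apply (hι : IsContinuousIntoHol Ω ι)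
    (hΩ : IsOpen Ω) {g G : ℂ → ℂ} (hg : ContinuousOn g Ω) {φ : ℝ → ℂ} {t : ℝ} (ht : 0 ≤ t)
    (hφ : ∀ s ∈ Icc 0 t, φ s ∈ Ω ∧ HasDerivWithinAt φ (G (φ s)) (Ici 0) s) {c c' : ℝ → X}
    (hc : ∀ r ∈ Icc 0 t, HasDerivWithinAt c (c' r) (Ici 0) r)
    (hcc' : ∀ r ∈ Icc 0 t, ∀ w ∈ Ω, ι (c' r) w = g w * ι (c r) w + G w * deriv (ι (c r)) w) :
    ι (c t) (φ 0) = Complex.exp (∫ s in 0..t, g (φ s)) * ι (c 0) (φ t) := by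
  set E := fun s => ∫ u in 0..s, g (φ u)
  set F := fun s => Complex.exp (E s) * ι (c (t - s)) (φ s)
  have hφcont : ContinuousOn φ (Icc 0 t) := fun s hs =>
    (hφ s hs).2.continuousWithinAt.mono Icc_subset_Ici_self
  have hgφ : ContinuousOn (fun s => g (φ s)) (Icc 0 t) := hg.comp hφcont fun s hs => (hφ s hs).1
  have hrev : ∀ s ∈ Icc 0 t, HasDerivWithinAt (fun s => c (t - s)) (-c' (t - s)) (Icc 0 t) s := by
    intro s hs
    have hts : t - s ∈ Icc 0 t := ⟨by linarith [hs.2], by linarith [hs.1]⟩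
    simpa [Function.comp_def] using
      (hc _ hts).scomp s ((hasDerivAt_id s).const_sub t).hasDerivWithinAt
      fun u (hu : u ∈ Icc 0 t) => show t - id u ∈ Ici 0 from sub_nonneg.2 hu.2
  have hFcont : ContinuousOn F (Icc 0 t) := by
    refine (Complex.continuous_exp.comp_continuousOn ?_).mul fun s hs =>
      hι.tendsto_apply_apply hΩ (hrev s hs).continuousWithinAt (hφcont s hs) (hφ s hs).1
    have hprim := intervalIntegral.continuousOn_primitive_interval (μ := volume)
      (by rw [uIcc_of_le ht]; exact hgφ.integrableOn_Icc)
    rwa [uIcc_of_le ht] at hprim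
  have hFderiv : ∀ s ∈ Ico 0 t, HasDerivWithinAt F 0 (Ici s) s := by
    intro s hs
    have hs' : s ∈ Icc 0 t := Ico_subset_Icc_self hs
    have hsub : Icc s t ⊆ Icc 0 t := Icc_subset_Icc_left hs.1
    have hE : HasDerivWithinAt E (g (φ s)) (Icc s t) s :=
      (hasDerivWithinAt_integral_Ici_of_continuousOn hgφ hs).mono Icc_subset_Ici_self
    have hA := hι.hasDerivWithinAt_apply_apply hΩ ((hrev s hs').mono hsub)
      ((hφ s hs').2.mono (hsub.trans Icc_subset_Ici_self)) (hφ s hs').1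
    have hF := hE.cexp.mul hA
    rw [map_neg, Pi.neg_apply,
      hcc' (t - s) ⟨by linarith [hs.2], by linarith [hs.1]⟩ _ (hφ s hs').1] at hF
    rw [show ∀ e k a d γ : ℂ, e * k * a + e * (-(k * a + γ * d) + d * γ) = 0 by intros; ring] at hF
    exact hF.mono_of_mem_nhdsWithin (Icc_mem_nhdsGE hs.2)
  simpa [F, E] using (constant_of_has_deriv_right_zero hFcont hFderiv t ⟨ht, le_rfl⟩).symm

end IsContinuousIntoHol

theorem semigroup_is_weighted_composition_on_maximal_interval_general
    -- Ω : nonempty open simply connected subset of ℂ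
    (Ω : Set ℂ) (hΩopen : IsOpen Ω)
    -- X : complex Banach space embedding continuously in Hol(Ω)
    (X : Type*) [NormedAddCommGroup X] [NormedSpace ℂ X] [CompleteSpace X]
    (ι : X →ₗ[ℂ] (ℂ → ℂ))
    (hι_hol : ∀ f : X, DifferentiableOn ℂ (ι f) Ω)
    (hι_emb : ∀ K ⊆ Ω, IsCompact K → ∃ C > 0, ∀ f : X, ∀ z ∈ K, ‖ι f z‖ ≤ C * ‖f‖)
    -- g, G ∈ Hol(Ω)
    (g G : ℂ → ℂ) (hg : DifferentiableOn ℂ g Ω)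
    -- φ(·,z) : [0, τ(z)) → Ω, the unique maximal solution of u′ = G(u), u(0) = z
    (τ : ℂ → ℝ≥0∞)
    (φ : ℝ → ℂ → ℂ)
    (hφ_zero : ∀ z ∈ Ω, φ 0 z = z)
    (hφ_sol : ∀ z ∈ Ω, ∀ t : ℝ, 0 ≤ t → ENNReal.ofReal t < τ z →
      φ t z ∈ Ω ∧ HasDerivWithinAt (fun s : ℝ => φ s z) (G (φ t z)) (Ici 0) t)
    -- (S_t) : strongly continuous semigroup on X
    (S : ℝ → X →L[ℂ] X)
    (hS_zero : S 0 = ContinuousLinearMap.id ℂ X)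
    (hS_add : ∀ t ≥ (0:ℝ), ∀ s ≥ (0:ℝ), S (t + s) = (S t).comp (S s))
    (hS_cont : ∀ f : X, Tendsto (fun t : ℝ => S t f) (𝓝[>] 0) (𝓝 f))
    -- (Γ, 𝒟) : its infinitesimal generator, with Γ f = g f + G f′
    (Γ : X → X) (𝒟 : Set X)
    (h𝒟 : ∀ f : X, f ∈ 𝒟 ↔
      ∃ L : X, Tendsto (fun t : ℝ => (1 / (t:ℂ)) • (S t f - f)) (𝓝[>] 0) (𝓝 L))
    (hΓ : ∀ f ∈ 𝒟,
      Tendsto (fun t : ℝ => (1 / (t:ℂ)) • (S t f - f)) (𝓝[>] 0) (𝓝 (Γ f)))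
    (hΓ_form : ∀ f ∈ 𝒟, ∀ z ∈ Ω, ι (Γ f) z = g z * ι f z + G z * deriv (ι f) z) :
    -- conclusion : (S_t f)(z) = m_t(z) f(φ(t,z)) for 0 ≤ t < τ(z)
    ∀ f : X, ∀ z ∈ Ω, ∀ t : ℝ, 0 ≤ t → ENNReal.ofReal t < τ z →
      ι (S t f) z = Complex.exp (∫ s in (0:ℝ)..t, g (φ s z)) * ι f (φ t z) := by
  intro f z hz t ht htτ
  have hS : IsC0Semigroup S := ⟨hS_zero, hS_add, hS_cont⟩
  have hι : IsContinuousIntoHol Ω ι := ⟨hι_hol, hι_emb⟩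
  have hdom : ∀ y, y ∈ 𝒟 ↔ ∃ v, HasDerivWithinAt (fun s => S s y) v (Ici 0) 0 := fun y =>
    (h𝒟 y).trans (exists_congr fun _ => hS.tendsto_smul_sub_iff_hasDerivWithinAt)
  have hgen : ∀ y ∈ 𝒟, HasDerivWithinAt (fun s => S s y) (Γ y) (Ici 0) 0 := fun y hy =>
    hS.tendsto_smul_sub_iff_hasDerivWithinAt.1 (hΓ y hy)
  have hcomm : ∀ y ∈ 𝒟, ∀ r ≥ (0:ℝ), S r y ∈ 𝒟 ∧ Γ (S r y) = S r (Γ y) := fun y hy r hr => by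
    have hderiv := hS.hasDerivWithinAt_orbit_apply (hgen y hy) hr
    have hmem := (hdom _).2 ⟨_, hderiv⟩
    exact ⟨hmem, (uniqueDiffWithinAt_Ici 0).eq_deriv _ (hgen _ hmem) hderiv⟩
  have hφ : ∀ s ∈ Icc 0 t, φ s z ∈ Ω ∧ HasDerivWithinAt (fun s => φ s z) (G (φ s z)) (Ici 0) s :=
    fun s hs => hφ_sol z hz s hs.1 ((ENNReal.ofReal_le_ofReal hs.2).trans_lt htτ)
  have hweighted : EqOn (fun y => ι (S t y) z)
      (fun y => Complex.exp (∫ s in (0:ℝ)..t, g (φ s z)) * ι y (φ t z)) 𝒟 := fun y hy => by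
    simpa [hS.apply_zero, hφ_zero z hz] using
      hι.apply_eq_exp_integral_mul_apply hΩopen hg.continuousOn ht hφ
        (fun r hr => hS.hasDerivWithinAt_orbit (hgen y hy) hr.1)
        (fun r hr w hw => (hcomm y hy r hr.1).2 ▸ hΓ_form _ (hcomm y hy r hr.1).1 w hw)
  have hdense : Dense 𝒟 := hS.dense_setOf_hasDerivWithinAt.mono fun y hy => (hdom y).2 hy
  exact congrFun (Continuous.ext_on hdense ((hι.continuous_apply hΩopen hz).comp (S t).continuous)
    (continuous_const.mul (hι.continuous_apply hΩopen (hφ t ⟨ht, le_rfl⟩).1)) hweighted) f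

/-- If the generator of a strongly continuous semigroup `(S_t)` on
`X ↪ Hol(Ω)` satisfies `Γf = g f + G f′`, and `φ(·,z)` is the unique maximal solution of
`u′ = G(u), u(0) = z` on `[0, τ(z))`, then `(S_t f)(z) = m_t(z)·f(φ(t,z))` for
`0 ≤ t < τ(z)`, where `m_t(z) = exp(∫₀ᵗ g(φ(s,z)) ds)`. -/
theorem semigroup_is_weighted_composition_on_maximal_interval
    -- Ω : nonempty open simply connected subset of ℂ
    (Ω : Set ℂ) (hΩne : Ω.Nonempty) (hΩopen : IsOpen Ω)
    (hΩsc : SimplyConnectedSpace Ω)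
    -- X : complex Banach space embedding continuously in Hol(Ω)
    (X : Type*) [NormedAddCommGroup X] [NormedSpace ℂ X] [CompleteSpace X]
    (ι : X →ₗ[ℂ] (ℂ → ℂ)) (hι_inj : Function.Injective ι)
    (hι_hol : ∀ f : X, DifferentiableOn ℂ (ι f) Ω)
    (hι_emb : ∀ K ⊆ Ω, IsCompact K → ∃ C > 0, ∀ f : X, ∀ z ∈ K, ‖ι f z‖ ≤ C * ‖f‖)
    -- g, G ∈ Hol(Ω)
    (g G : ℂ → ℂ) (hg : DifferentiableOn ℂ g Ω) (hG : DifferentiableOn ℂ G Ω)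
    -- φ(·,z) : [0, τ(z)) → Ω, the unique maximal solution of u′ = G(u), u(0) = z
    (τ : ℂ → ℝ≥0∞) (hτ_pos : ∀ z ∈ Ω, 0 < τ z)
    (φ : ℝ → ℂ → ℂ)
    (hφ_zero : ∀ z ∈ Ω, φ 0 z = z)
    (hφ_sol : ∀ z ∈ Ω, ∀ t : ℝ, 0 ≤ t → ENNReal.ofReal t < τ z →
      φ t z ∈ Ω ∧ HasDerivWithinAt (fun s : ℝ => φ s z) (G (φ t z)) (Ici 0) t)
    -- maximality : no solution exists beyond time τ(z)
    (hφ_max : ∀ z ∈ Ω, ∀ T : ℝ≥0∞, ∀ ψ : ℝ → ℂ, τ z < T → ψ 0 = z →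
      ¬ (∀ t : ℝ, 0 ≤ t → ENNReal.ofReal t < T →
        ψ t ∈ Ω ∧ HasDerivWithinAt ψ (G (ψ t)) (Ici 0) t))
    -- (S_t) : strongly continuous semigroup on X
    (S : ℝ → X →L[ℂ] X)
    (hS_zero : S 0 = ContinuousLinearMap.id ℂ X)
    (hS_add : ∀ t ≥ (0:ℝ), ∀ s ≥ (0:ℝ), S (t + s) = (S t).comp (S s))
    (hS_cont : ∀ f : X, Tendsto (fun t : ℝ => S t f) (𝓝[>] 0) (𝓝 f))
    -- (Γ, 𝒟) : its infinitesimal generator, with Γ f = g f + G f′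
    (Γ : X → X) (𝒟 : Set X)
    (h𝒟 : ∀ f : X, f ∈ 𝒟 ↔
      ∃ L : X, Tendsto (fun t : ℝ => (1 / (t:ℂ)) • (S t f - f)) (𝓝[>] 0) (𝓝 L))
    (hΓ : ∀ f ∈ 𝒟,
      Tendsto (fun t : ℝ => (1 / (t:ℂ)) • (S t f - f)) (𝓝[>] 0) (𝓝 (Γ f)))
    (hΓ_form : ∀ f ∈ 𝒟, ∀ z ∈ Ω, ι (Γ f) z = g z * ι f z + G z * deriv (ι f) z) :
    -- conclusion : (S_t f)(z) = m_t(z) f(φ(t,z)) for 0 ≤ t < τ(z)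
    ∀ f : X, ∀ z ∈ Ω, ∀ t : ℝ, 0 ≤ t → ENNReal.ofReal t < τ z →
      ι (S t f) z = Complex.exp (∫ s in (0:ℝ)..t, g (φ s z)) * ι f (φ t z) :=
  semigroup_is_weighted_composition_on_maximal_interval_general Ω hΩopen X ι hι_hol hι_emb g G hg τ
    φ hφ_zero hφ_sol S hS_zero hS_add hS_cont Γ 𝒟 h𝒟 hΓ hΓ_form
end
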